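/- arXiv:1207.0596 — 6 statements merged into one kernel-verified Lean document; each statement's English description precedes it below -/
import Mathlib

section
/- Let d ≥ 2 and let φ : ℝ^d → (0,∞) be continuous and satisfy the collision-invariance functional equation φ(p)·φ(p_*) = φ(p')·φ(p'_*) for all p, p_*, p', p'_* ∈ ℝ^d with p + p_* = p' + p'_* and |p|² + |p_*|² = |p'|² + |p'_*|². Then there exist a ∈ ℝ, b ∈ ℝ^d and c ∈ ℝ such that φ(p) = exp(a + b·p + c|p|²) for all p ∈ ℝ^d; i.e., φ is a Maxwellian. -/
/-!
The logarithm `ψ` of such a function is a collision invariant: `ψ p + ψ p_*` depends only on the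
momentum and energy of the pair. Collision invariants form a vector space closed under
`ψ ↦ ψ ∘ neg`, so it suffices to treat odd and even invariants separately. Writing a pair as
`m ± r` and rotating `r` to be orthogonal to `m` (possible since `d ≥ 2`) shows that an odd
invariant is additive, hence linear by continuity, i.e. `p ↦ ⟪b, p⟫`. With `m = 0` the same
rotation shows that an even invariant is radial, `ψ p = ψ 0 + G ‖p‖²`, and additivity on
orthogonal pairs makes `G` additive on `[0, ∞)`, hence `G s = c s`.
-/

open Set Module
open scoped RealInnerProductSpace

theorem exists_inner_eq_zero_and_norm_eq {E : Type*} [NormedAddCommGroup E]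
    [InnerProductSpace ℝ E] [FiniteDimensional ℝ E] (hE : 2 ≤ finrank ℝ E) (x : E) {c : ℝ}
    (hc : 0 ≤ c) : ∃ y : E, ⟪x, y⟫ = 0 ∧ ‖y‖ = c := by
  have hspan : finrank ℝ (ℝ ∙ x) ≤ 1 := by simpa using finrank_span_le_card ({x} : Set E)
  have hsum := (ℝ ∙ x).finrank_add_finrank_orthogonal
  have : Nontrivial (ℝ ∙ x)ᗮ := (Module.finrank_pos_iff (R := ℝ)).mp (by omega)
  obtain ⟨y, hy⟩ := exists_norm_eq (ℝ ∙ x)ᗮ hc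
  exact ⟨y, Submodule.mem_orthogonal_singleton_iff_inner_right.mp y.2, hy⟩

theorem eq_mul_of_continuousOn_of_additive_on_Ici {G : ℝ → ℝ} (hG : ContinuousOn G (Ici 0))
    (hadd : ∀ a b, 0 ≤ a → 0 ≤ b → G (a + b) = G a + G b) {a : ℝ} (ha : 0 ≤ a) :
    G a = a * G 1 := by
  have hG0 : G 0 = 0 := by simpa using hadd 0 0 le_rfl le_rfl
  -- `t ↦ G t⁺ - G t⁻` is additive on `ℝ` since `(s + t)⁺ + s⁻ + t⁻ = (s + t)⁻ + s⁺ + t⁺`.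
  let H : ℝ →+ ℝ := AddMonoidHom.mk' (fun t => G (max t 0) - G (max (-t) 0)) fun s t => by
    have hadd₃ : ∀ a b c : ℝ, 0 ≤ a → 0 ≤ b → 0 ≤ c → G (a + b + c) = G a + G b + G c :=
      fun a b c ha hb hc => by rw [hadd _ _ (by positivity) hc, hadd _ _ ha hb]
    have key :
        max (s + t) 0 + max (-s) 0 + max (-t) 0 = max (-(s + t)) 0 + max s 0 + max t 0 := by
      linarith [max_zero_sub_max_neg_zero_eq_self (s + t), max_zero_sub_max_neg_zero_eq_self s,
        max_zero_sub_max_neg_zero_eq_self t]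
    have := congrArg G key
    rw [hadd₃ _ _ _ (le_max_right _ _) (le_max_right _ _) (le_max_right _ _),
      hadd₃ _ _ _ (le_max_right _ _) (le_max_right _ _) (le_max_right _ _)] at this
    linarith
  have hH : Continuous H := by
    have hpos : Continuous fun t : ℝ => G (max t 0) :=
      hG.comp_continuous (continuous_id.max continuous_const) fun t => le_max_right t 0
    exact hpos.sub (hpos.comp continuous_neg)
  have hlin : H a = a * H 1 := by simpa using map_real_smul H hH a 1
  simpa [H, ha, hG0] using hlin

theorem exists_inner_eq_of_continuous_of_additive {E : Type*} [NormedAddCommGroup E]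
    [InnerProductSpace ℝ E] [CompleteSpace E] {h : E → ℝ} (hcont : Continuous h)
    (hadd : ∀ x y, h (x + y) = h x + h y) : ∃ b : E, ∀ x, h x = ⟪b, x⟫ := by
  let ℓ := (AddMonoidHom.mk' h hadd).toRealLinearMap hcont
  exact ⟨(InnerProductSpace.toDual ℝ E).symm ℓ, fun x => by
    rw [InnerProductSpace.toDual_symm_apply]; rfl⟩

variable (E : Type*) [NormedAddCommGroup E]

def collisionInvariants : Submodule ℝ (E → ℝ) where
  carrier := {ψ | ∀ p q p' q' : E, p + q = p' + q' → ‖p‖ ^ 2 + ‖q‖ ^ 2 = ‖p'‖ ^ 2 + ‖q'‖ ^ 2 →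
    ψ p + ψ q = ψ p' + ψ q'}
  add_mem' {ψ χ} hψ hχ p q p' q' hsum hnorm := by
    simp only [Pi.add_apply]
    linarith [hψ p q p' q' hsum hnorm, hχ p q p' q' hsum hnorm]
  zero_mem' _ _ _ _ _ _ := by simp
  smul_mem' c ψ hψ p q p' q' hsum hnorm := by
    simp only [Pi.smul_apply, smul_eq_mul, ← mul_add, hψ p q p' q' hsum hnorm]

variable {E}

namespace collisionInvariants

theorem comp_neg_mem {ψ : E → ℝ} (hψ : ψ ∈ collisionInvariants E) :
    (fun x => ψ (-x)) ∈ collisionInvariants E := fun p q p' q' hsum hnorm =>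
  hψ (-p) (-q) (-p') (-q') (by rw [← neg_add, hsum, neg_add]) (by simpa only [norm_neg])

variable [InnerProductSpace ℝ E] {ψ : E → ℝ}

theorem apply_add_add_apply_zero_of_inner_eq_zero (hψ : ψ ∈ collisionInvariants E) {x y : E}
    (hxy : ⟪x, y⟫ = 0) : ψ (x + y) + ψ 0 = ψ x + ψ y :=
  hψ _ _ _ _ (add_zero _) (by rw [norm_add_sq_real, hxy, norm_zero]; ring)

theorem apply_add_add_apply_sub_eq_of_norm_eq (hψ : ψ ∈ collisionInvariants E) (m : E) {r r' : E}
    (hr : ‖r‖ = ‖r'‖) : ψ (m + r) + ψ (m - r) = ψ (m + r') + ψ (m - r') :=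
  hψ _ _ _ _ (by abel) (by simp only [norm_add_sq_real, norm_sub_sq_real, hr]; ring)

section FiniteDimensional

variable [FiniteDimensional ℝ E] (hE : 2 ≤ finrank ℝ E)
include hE

theorem map_add_of_odd (hψ : ψ ∈ collisionInvariants E) (hodd : ∀ x, ψ (-x) = -ψ x)
    (x y : E) : ψ (x + y) = ψ x + ψ y := by
  have h0 : ψ 0 = 0 := by linarith [neg_zero (G := E) ▸ hodd 0]
  -- Rotating the relative velocity `r` to one orthogonal to `m` splits each term additively.
  have hmid : ∀ m r : E, ψ (m + r) + ψ (m - r) = 2 * ψ m := by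
    intro m r
    obtain ⟨r', hr', hnorm⟩ := exists_inner_eq_zero_and_norm_eq hE m (norm_nonneg r)
    have hsub : ψ (m - r') + ψ 0 = ψ m + ψ (-r') := by
      rw [sub_eq_add_neg]
      exact apply_add_add_apply_zero_of_inner_eq_zero hψ (by rw [inner_neg_right, hr', neg_zero])
    rw [apply_add_add_apply_sub_eq_of_norm_eq hψ m hnorm.symm]
    linarith [apply_add_add_apply_zero_of_inner_eq_zero hψ hr', hodd r']
  set m : E := (2⁻¹ : ℝ) • (x + y)
  have hsum : ψ (x + y) = 2 * ψ m := by
    simpa [h0, show m + m = x + y by module] using hmid m m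
  have hsplit : ψ x + ψ y = 2 * ψ m := by
    simpa only [show m + (2⁻¹ : ℝ) • (x - y) = x by module,
      show m - (2⁻¹ : ℝ) • (x - y) = y by module] using hmid m ((2⁻¹ : ℝ) • (x - y))
  rw [hsum, hsplit]

theorem exists_eq_add_mul_norm_sq_of_even (hψ : ψ ∈ collisionInvariants E) (hcont : Continuous ψ)
    (heven : ∀ x, ψ (-x) = ψ x) : ∃ c : ℝ, ∀ x, ψ x = ψ 0 + c * ‖x‖ ^ 2 := by
  have hradial : ∀ x y : E, ‖x‖ = ‖y‖ → ψ x = ψ y := by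
    intro x y hxy
    have := apply_add_add_apply_sub_eq_of_norm_eq hψ 0 hxy
    simp only [zero_add, zero_sub, heven] at this
    linarith
  have : Nontrivial E := (Module.finrank_pos_iff (R := ℝ)).mp (by omega)
  obtain ⟨e, he⟩ := exists_norm_eq E zero_le_one
  obtain ⟨e', hee', he'⟩ := exists_inner_eq_zero_and_norm_eq hE e zero_le_one
  have hnorm : ∀ (a : ℝ) {u : E}, ‖u‖ = 1 → ‖√a • u‖ = √a := fun a u hu => by
    rw [norm_smul, hu, mul_one, Real.norm_of_nonneg (Real.sqrt_nonneg a)]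
  let G : ℝ → ℝ := fun a => ψ (√a • e) - ψ 0
  have hG : ∀ a b, 0 ≤ a → 0 ≤ b → G (a + b) = G a + G b := by
    intro a b ha hb
    have horth : ⟪√a • e, √b • e'⟫ = 0 := by
      rw [real_inner_smul_left, real_inner_smul_right, hee', mul_zero, mul_zero]
    have hab : ψ (√(a + b) • e) = ψ (√a • e + √b • e') := hradial _ _ <| by
      rw [← sq_eq_sq₀ (norm_nonneg _) (norm_nonneg _), norm_add_sq_real, horth, hnorm _ he,
        hnorm _ he, hnorm _ he', Real.sq_sqrt ha, Real.sq_sqrt hb, Real.sq_sqrt (add_nonneg ha hb)]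
      ring
    have hb' : ψ (√b • e') = ψ (√b • e) := hradial _ _ (by rw [hnorm _ he, hnorm _ he'])
    simp only [G]
    linarith [apply_add_add_apply_zero_of_inner_eq_zero hψ horth]
  have hGcont : ContinuousOn G (Ici 0) := by fun_prop
  refine ⟨G 1, fun x => ?_⟩
  have hx : ψ x = ψ (√(‖x‖ ^ 2) • e) :=
    hradial _ _ (by rw [hnorm _ he, Real.sqrt_sq (norm_nonneg x)])
  have := eq_mul_of_continuousOn_of_additive_on_Ici hGcont hG (sq_nonneg ‖x‖)
  simp only [G] at this
  linarith

theorem exists_eq_add_inner_add_mul_norm_sq (hψ : ψ ∈ collisionInvariants E)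
    (hcont : Continuous ψ) : ∃ (a : ℝ) (b : E) (c : ℝ), ∀ p, ψ p = a + ⟪b, p⟫ + c * ‖p‖ ^ 2 := by
  let ψodd : E → ℝ := fun x => 2⁻¹ * (ψ x - ψ (-x))
  let ψeven : E → ℝ := fun x => 2⁻¹ * (ψ x + ψ (-x))
  have hneg := comp_neg_mem hψ
  have hodd : ψodd ∈ collisionInvariants E :=
    Submodule.smul_mem _ 2⁻¹ (Submodule.sub_mem _ hψ hneg)
  have heven : ψeven ∈ collisionInvariants E :=
    Submodule.smul_mem _ 2⁻¹ (Submodule.add_mem _ hψ hneg)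
  obtain ⟨b, hb⟩ := exists_inner_eq_of_continuous_of_additive (h := ψodd) (by fun_prop)
    (map_add_of_odd hE hodd fun x => by simp only [ψodd, neg_neg]; ring)
  obtain ⟨c, hc⟩ := exists_eq_add_mul_norm_sq_of_even hE heven (by fun_prop)
    fun x => by simp only [ψeven, neg_neg]; ring
  simp only [ψodd, ψeven, neg_zero] at hb hc
  exact ⟨ψ 0, b, c, fun p => by linarith [hb p, hc p]⟩

end FiniteDimensional

end collisionInvariants

/-- any continuous positive function on `ℝ^d`, `d ≥ 2`, satisfying the
collision-invariance functional equation is a Maxwellian. -/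
theorem maxwellian_of_collision_invariant
    (d : ℕ) (hd : 2 ≤ d)
    (φ : EuclideanSpace ℝ (Fin d) → ℝ)
    (hφpos : ∀ p, 0 < φ p)
    (hφcont : Continuous φ)
    (hcoll : ∀ p ps p' ps' : EuclideanSpace ℝ (Fin d),
      p + ps = p' + ps' → ‖p‖ ^ 2 + ‖ps‖ ^ 2 = ‖p'‖ ^ 2 + ‖ps'‖ ^ 2 →
      φ p * φ ps = φ p' * φ ps') :
    ∃ (a : ℝ) (b : EuclideanSpace ℝ (Fin d)) (c : ℝ),
      ∀ p, φ p = Real.exp (a + inner ℝ b p + c * ‖p‖ ^ 2) := by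
  have hlog : (fun p => Real.log (φ p)) ∈ collisionInvariants (EuclideanSpace ℝ (Fin d)) :=
    fun p q p' q' hsum hnorm => by
      simp only [← Real.log_mul (hφpos _).ne' (hφpos _).ne', hcoll p q p' q' hsum hnorm]
  obtain ⟨a, b, c, h⟩ := collisionInvariants.exists_eq_add_inner_add_mul_norm_sq
    (by simpa using hd) hlog (hφcont.log fun p => (hφpos p).ne')
  exact ⟨a, b, c, fun p => by rw [← h p, Real.exp_log (hφpos p)]⟩
end

section
/- Let ε ∈ {−1, +1} and let f : ℝ³ → (0,∞) be continuous, with f(p) < 1 for all p in the case ε = −1. Suppose that for all p, p_*, p', p'_* ∈ ℝ³ with p + p_* = p' + p'_* and |p|² + |p_*|² = |p'|² + |p'_*|² one has (f(p')/(1+εf(p'))) · (f(p'_*)/(1+εf(p'_*))) = (f(p)/(1+εf(p))) · (f(p_*)/(1+εf(p_*))). Then there exist a ∈ ℝ, b ∈ ℝ³, c ∈ ℝ such that, with M(p) = exp(a + b·p + c|p|²), one has εM(p) < 1 and f(p) = M(p)/(1 − εM(p)) for all p ∈ ℝ³; i.e., f is a Planckian (Bose–Einstein distribution for ε = 1, Fermi–Dirac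 distribution for ε = −1). -/
/-!
With `g = f / (1 + ε f)`, the equilibrium relation on the collisions `(u + v, 0) ↦ (u, v)` with
`u ⟂ v` says that `log g - log g 0` is orthogonally additive. A continuous orthogonally additive
function is a continuous linear functional plus `c ‖p‖²`: its even part depends only on `‖p‖` and
is additive in `‖p‖²`, while its odd part is additive along rays, hence homogeneous, hence linear.
Finally `f = g / (1 - ε g)` exhibits `f` as a Planckian of the Maxwellian `g`.
-/

open Set
open scoped RealInnerProductSpace

theorem eq_mul_apply_one_of_map_add_of_nonneg {Q : ℝ → ℝ} (hc : ContinuousOn Q (Ici 0))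
    (hadd : ∀ s t, 0 ≤ s → 0 ≤ t → Q (s + t) = Q s + Q t) {s : ℝ} (hs : 0 ≤ s) :
    Q s = s * Q 1 := by
  have hQ0 : Q 0 = 0 := by simpa using hadd 0 0 le_rfl le_rfl
  have hadd₃ : ∀ a b c, 0 ≤ a → 0 ≤ b → 0 ≤ c → Q (a + b + c) = Q a + Q b + Q c :=
    fun a b c ha hb hc => by rw [hadd _ _ (add_nonneg ha hb) hc, hadd _ _ ha hb]
  -- the odd extension of `Q` to `ℝ`, which is additive because `r = max r 0 - max (-r) 0`
  set P : ℝ → ℝ := fun r => Q (max r 0) - Q (max (-r) 0) with hP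
  have hP_add : ∀ x y, P (x + y) = P x + P y := by
    intro x y
    have hsplit : max (x + y) 0 + max (-x) 0 + max (-y) 0
        = max x 0 + max y 0 + max (-(x + y)) 0 := by
      linarith [max_zero_sub_max_neg_zero_eq_self x, max_zero_sub_max_neg_zero_eq_self y,
        max_zero_sub_max_neg_zero_eq_self (x + y)]
    have h := congrArg Q hsplit
    rw [hadd₃ _ _ _ (le_max_right _ _) (le_max_right _ _) (le_max_right _ _),
      hadd₃ _ _ _ (le_max_right _ _) (le_max_right _ _) (le_max_right _ _)] at h
    simp only [hP]
    linarith
  have hP_cont : Continuous P := by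
    have hmax : ∀ g : ℝ → ℝ, Continuous g → Continuous fun r => Q (max (g r) 0) :=
      fun g hg => hc.comp_continuous (hg.max continuous_const) fun _ =>
        mem_Ici.mpr (le_max_right _ _)
    exact (hmax _ continuous_id).sub (hmax _ continuous_neg)
  have h := map_real_smul (AddMonoidHom.mk' P hP_add) hP_cont s 1
  simpa [hP, hs, hQ0] using h

section InnerProductSpace

variable {E : Type*} [NormedAddCommGroup E] [InnerProductSpace ℝ E]

theorem exists_norm_eq_one_inner_eq_zero (hE : 1 < Module.rank ℝ E) (u : E) :
    ∃ z : E, ‖z‖ = 1 ∧ ⟪u, z⟫ = 0 := by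
  by_contra! hno
  have hbot : (ℝ ∙ u)ᗮ = ⊥ := by
    refine (Submodule.eq_bot_iff _).mpr fun z hz => by_contra fun hz0 => ?_
    refine hno _ (norm_smul_inv_norm (𝕜 := ℝ) hz0) ?_
    rw [inner_smul_right, Submodule.mem_orthogonal_singleton_iff_inner_right.mp hz, mul_zero]
  have hrank : Module.rank ℝ E ≤ 1 := by
    rw [← rank_top ℝ E, ← Submodule.orthogonal_eq_bot_iff.mp hbot]
    exact (rank_span_le _).trans (by simp)
  exact hrank.not_gt hE

def OrthogonallyAdditive (H : E → ℝ) : Prop :=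
  ∀ u v : E, ⟪u, v⟫ = 0 → H (u + v) = H u + H v

namespace OrthogonallyAdditive

variable {H H' : E → ℝ}

theorem add (h : OrthogonallyAdditive H) (h' : OrthogonallyAdditive H') :
    OrthogonallyAdditive (H + H') := fun u v huv => by
  simp only [Pi.add_apply, h u v huv, h' u v huv]; ring

theorem sub (h : OrthogonallyAdditive H) (h' : OrthogonallyAdditive H') :
    OrthogonallyAdditive (H - H') := fun u v huv => by
  simp only [Pi.sub_apply, h u v huv, h' u v huv]; ring

theorem comp_neg (h : OrthogonallyAdditive H) : OrthogonallyAdditive fun p => H (-p) :=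
  fun u v huv => by
    show H (-(u + v)) = H (-u) + H (-v)
    rw [neg_add, h _ _ (by rwa [inner_neg_neg])]

theorem eq_of_norm_eq (h : OrthogonallyAdditive H) (heven : ∀ p, H (-p) = H p) {x y : E}
    (hxy : ‖x‖ = ‖y‖) : H x = H y := by
  -- `x` and `y` are `p ± q` with `p = (x + y) / 2 ⟂ q = (x - y) / 2`
  set p : E := (1 / 2 : ℝ) • (x + y)
  set q : E := (1 / 2 : ℝ) • (x - y)
  have hpq : ⟪p, q⟫ = 0 := by
    rw [real_inner_smul_left, real_inner_smul_right, (real_inner_add_sub_eq_zero_iff x y).mpr hxy,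
      mul_zero, mul_zero]
  calc H x = H (p + q) := by congr 1; module
    _ = H p + H (-q) := by rw [h p q hpq, heven]
    _ = H (p + -q) := (h p (-q) (by rw [inner_neg_right, hpq, neg_zero])).symm
    _ = H y := by congr 1; module

theorem exists_eq_mul_norm_sq (h : OrthogonallyAdditive H) (hE : 1 < Module.rank ℝ E)
    (hc : Continuous H) (heven : ∀ p, H (-p) = H p) : ∃ c : ℝ, ∀ p, H p = c * ‖p‖ ^ 2 := by
  obtain ⟨u, hu, -⟩ := exists_norm_eq_one_inner_eq_zero hE (0 : E)
  obtain ⟨z, hz, huz⟩ := exists_norm_eq_one_inner_eq_zero hE u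
  have hnorm : ∀ {w : E}, ‖w‖ = 1 → ∀ r : ℝ, ‖√r • w‖ = √r := fun hw r => by
    rw [norm_smul, hw, mul_one, Real.norm_of_nonneg (Real.sqrt_nonneg r)]
  set Q : ℝ → ℝ := fun r => H (√r • u)
  have hQ : ∀ p, H p = Q (‖p‖ ^ 2) := fun p =>
    h.eq_of_norm_eq heven (by rw [hnorm hu, Real.sqrt_sq (norm_nonneg p)])
  have hQ_add : ∀ s t, 0 ≤ s → 0 ≤ t → Q (s + t) = Q s + Q t := by
    intro s t hs ht
    have horth : ⟪√s • u, √t • z⟫ = 0 := by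
      rw [real_inner_smul_left, real_inner_smul_right, huz, mul_zero, mul_zero]
    have hsum : ‖√(s + t) • u‖ = ‖√s • u + √t • z‖ := by
      rw [← sq_eq_sq₀ (norm_nonneg _) (norm_nonneg _), norm_add_sq_real, horth, hnorm hu,
        hnorm hu, hnorm hz, Real.sq_sqrt hs, Real.sq_sqrt ht, Real.sq_sqrt (add_nonneg hs ht)]
      ring
    calc Q (s + t) = H (√s • u + √t • z) := h.eq_of_norm_eq heven hsum
      _ = Q s + Q t := by
        rw [h _ _ horth,
          h.eq_of_norm_eq heven (x := √t • z) (y := √t • u) (by rw [hnorm hu, hnorm hz])]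
  have hQ_cont : Continuous Q := hc.comp (Real.continuous_sqrt.smul continuous_const)
  refine ⟨Q 1, fun p => ?_⟩
  rw [hQ p, eq_mul_apply_one_of_map_add_of_nonneg hQ_cont.continuousOn hQ_add (sq_nonneg _),
    mul_comm]

theorem map_smul_of_odd (h : OrthogonallyAdditive H) (hE : 1 < Module.rank ℝ E)
    (hc : Continuous H) (hodd : ∀ p, H (-p) = -H p) (r : ℝ) (x : E) : H (r • x) = r * H x := by
  have hray : ∀ s t : ℝ, 0 ≤ s → 0 ≤ t → H ((s + t) • x) = H (s • x) + H (t • x) := by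
    intro s t hs ht
    obtain ⟨z, hz, hxz⟩ := exists_norm_eq_one_inner_eq_zero hE x
    -- `v ⟂ x` with `‖v‖ ^ 2 = s * t * ‖x‖ ^ 2` makes `s • x + v ⟂ t • x - v`
    set v : E := (√(s * t) * ‖x‖) • z
    have hxv : ⟪x, v⟫ = 0 := by rw [real_inner_smul_right, hxz, mul_zero]
    have hv : ‖v‖ ^ 2 = s * t * ‖x‖ ^ 2 := by
      rw [norm_smul, hz, mul_one, Real.norm_of_nonneg (by positivity), mul_pow,
        Real.sq_sqrt (mul_nonneg hs ht)]
    have horth : ⟪s • x + v, t • x + -v⟫ = 0 := by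
      simp only [inner_add_left, inner_add_right, inner_neg_right, real_inner_smul_left,
        real_inner_smul_right, hxv, real_inner_comm x v, real_inner_self_eq_norm_sq, hv]
      ring
    calc H ((s + t) • x) = H ((s • x + v) + (t • x + -v)) := by congr 1; module
      _ = H (s • x) + H (t • x) := by
        rw [h _ _ horth, h _ _ (by rw [real_inner_smul_left, hxv, mul_zero]),
          h _ _ (by rw [inner_neg_right, real_inner_smul_left, hxv, mul_zero, neg_zero]), hodd]
        ring
  have hline : ∀ s, 0 ≤ s → H (s • x) = s * H x := fun s hs => by
    simpa using eq_mul_apply_one_of_map_add_of_nonneg (Q := fun s => H (s • x))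
      (hc.comp (continuous_id.smul continuous_const)).continuousOn hray hs
  rcases le_total 0 r with hr | hr
  · exact hline r hr
  · have := hline (-r) (neg_nonneg.mpr hr)
    rw [neg_smul, hodd] at this
    linarith

theorem map_add_of_odd (h : OrthogonallyAdditive H) (hE : 1 < Module.rank ℝ E)
    (hc : Continuous H) (hodd : ∀ p, H (-p) = -H p) (x y : E) : H (x + y) = H x + H y := by
  have hsmul := h.map_smul_of_odd hE hc hodd
  -- split `y = t • x + w` with `w ⟂ x`
  set t : ℝ := ⟪x, y⟫ / ‖x‖ ^ 2
  set w : E := y - t • x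
  have hxw : ∀ r : ℝ, ⟪r • x, w⟫ = 0 := fun r => by
    rcases eq_or_ne x 0 with rfl | hx
    · simp
    rw [real_inner_smul_left, inner_sub_right, real_inner_smul_right, real_inner_self_eq_norm_sq,
      div_mul_cancel₀ _ (by positivity), sub_self, mul_zero]
  calc H (x + y) = H ((1 + t) • x + w) := by congr 1; module
    _ = H x + H (t • x + w) := by rw [h _ _ (hxw _), h _ _ (hxw _), hsmul, hsmul]; ring
    _ = H x + H y := by congr 2; module

theorem exists_continuousLinearMap_of_odd (h : OrthogonallyAdditive H)
    (hE : 1 < Module.rank ℝ E) (hc : Continuous H) (hodd : ∀ p, H (-p) = -H p) :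
    ∃ L : E →L[ℝ] ℝ, ∀ p, H p = L p :=
  ⟨⟨⟨⟨H, h.map_add_of_odd hE hc hodd⟩, h.map_smul_of_odd hE hc hodd⟩, hc⟩, fun _ => rfl⟩

theorem exists_continuousLinearMap_add_mul_norm_sq (h : OrthogonallyAdditive H)
    (hE : 1 < Module.rank ℝ E) (hc : Continuous H) :
    ∃ (L : E →L[ℝ] ℝ) (c : ℝ), ∀ p, H p = L p + c * ‖p‖ ^ 2 := by
  have hc_neg : Continuous fun p => H (-p) := hc.comp continuous_neg
  obtain ⟨c, heven⟩ := (h.add h.comp_neg).exists_eq_mul_norm_sq hE (hc.add hc_neg)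
    fun p => by simp only [Pi.add_apply, neg_neg, add_comm]
  obtain ⟨L, hodd⟩ := (h.sub h.comp_neg).exists_continuousLinearMap_of_odd hE (hc.sub hc_neg)
    fun p => by simp only [Pi.sub_apply, neg_neg, neg_sub]
  refine ⟨(1 / 2 : ℝ) • L, c / 2, fun p => ?_⟩
  have h₁ := heven p
  have h₂ := hodd p
  simp only [Pi.add_apply, Pi.sub_apply] at h₁ h₂
  rw [smul_apply, smul_eq_mul]
  linarith

theorem log_sub_log_zero {g : E → ℝ} (hpos : ∀ p, 0 < g p)
    (hmul : ∀ u v : E, ⟪u, v⟫ = 0 → g u * g v = g (u + v) * g 0) :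
    OrthogonallyAdditive fun p => Real.log (g p) - Real.log (g 0) := fun u v huv => by
  have h := congrArg Real.log (hmul u v huv)
  rw [Real.log_mul (hpos u).ne' (hpos v).ne', Real.log_mul (hpos _).ne' (hpos 0).ne'] at h
  linarith

end OrthogonallyAdditive

end InnerProductSpace

theorem mul_div_one_add_mul_lt_one {ε x : ℝ} (h : 0 < 1 + ε * x) : ε * (x / (1 + ε * x)) < 1 := by
  rw [← mul_div_assoc, div_lt_one h]
  linarith

theorem div_one_sub_mul_div_one_add_mul {ε x : ℝ} (h : 0 < 1 + ε * x) :
    x / (1 + ε * x) / (1 - ε * (x / (1 + ε * x))) = x := by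
  have hsub : 1 - ε * (x / (1 + ε * x)) = 1 / (1 + ε * x) := by
    field_simp
    ring
  rw [hsub, div_div_eq_mul_div, div_one, div_mul_cancel₀ _ h.ne']

/-- a continuous positive solution of the equilibrium relation coming from
the vanishing of the entropy production of the Nordheim–Boltzmann collision operator
(with `ε = 1` for bosons, `ε = -1` for fermions, and `f < 1` in the fermion case)
is a Planckian `M/(1 - εM)` with `M` a Maxwellian. -/
theorem planckian_of_NB_equilibrium
    (ε : ℝ) (hε : ε = -1 ∨ ε = 1)
    (f : EuclideanSpace ℝ (Fin 3) → ℝ)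
    (hfpos : ∀ p, 0 < f p)
    (hfcont : Continuous f)
    (hferm : ε = -1 → ∀ p, f p < 1)
    (hcoll : ∀ p ps p' ps' : EuclideanSpace ℝ (Fin 3),
      p + ps = p' + ps' → ‖p‖ ^ 2 + ‖ps‖ ^ 2 = ‖p'‖ ^ 2 + ‖ps'‖ ^ 2 →
      (f p' / (1 + ε * f p')) * (f ps' / (1 + ε * f ps'))
        = (f p / (1 + ε * f p)) * (f ps / (1 + ε * f ps))) :
    ∃ (a : ℝ) (b : EuclideanSpace ℝ (Fin 3)) (c : ℝ),
      ∀ p, ε * Real.exp (a + inner ℝ b p + c * ‖p‖ ^ 2) < 1 ∧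
        f p = Real.exp (a + inner ℝ b p + c * ‖p‖ ^ 2)
                / (1 - ε * Real.exp (a + inner ℝ b p + c * ‖p‖ ^ 2)) := by
  have hden : ∀ p, 0 < 1 + ε * f p := fun p => by
    rcases hε with rfl | rfl
    · linarith [hferm rfl p]
    · linarith [hfpos p]
  set g : EuclideanSpace ℝ (Fin 3) → ℝ := fun p => f p / (1 + ε * f p)
  have hg_pos : ∀ p, 0 < g p := fun p => div_pos (hfpos p) (hden p)
  have hg_cont : Continuous g :=
    hfcont.div (continuous_const.add (continuous_const.mul hfcont)) fun p => (hden p).ne'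
  -- the collisions `(u + v, 0) ↦ (u, v)` with `u ⟂ v` conserve momentum and energy
  have hlog := OrthogonallyAdditive.log_sub_log_zero hg_pos fun u v huv =>
    hcoll (u + v) 0 u v (add_zero _) (by rw [norm_zero, norm_add_sq_real, huv]; ring)
  obtain ⟨L, c, hL⟩ := hlog.exists_continuousLinearMap_add_mul_norm_sq
    (by rw [← Module.finrank_eq_rank, finrank_euclideanSpace_fin]; norm_num)
    ((hg_cont.log fun p => (hg_pos p).ne').sub continuous_const)
  refine ⟨Real.log (g 0), (InnerProductSpace.toDual ℝ _).symm L, c, fun p => ?_⟩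
  have hM : Real.exp (Real.log (g 0) + inner ℝ ((InnerProductSpace.toDual ℝ _).symm L) p
      + c * ‖p‖ ^ 2) = g p := by
    rw [InnerProductSpace.toDual_symm_apply, ← Real.exp_log (hg_pos p)]
    congr 1
    linarith [hL p]
  rw [hM]
  exact ⟨mul_div_one_add_mul_lt_one (hden p), (div_one_sub_mul_div_one_add_mul (hden p)).symm⟩
end

section
/- Let α ∈ (0,1) and let F : [0, 1/α] → ℝ be the anyon filling factor F(f) = (1−αf)^α (1+(1−α)f)^{1−α}. Then F is concave on [0, 1/α]. Moreover, if α ≥ 1/2 then F attains its maximum over [0, 1/α] at f = 0, while if α < 1/2 then F attains its maximum over [0, 1/α] at f = (1−2α)/(α(1−α)). -/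
noncomputable section

/-- The anyon filling factor `F(f) = (1−αf)^α (1+(1−α)f)^{1−α}`. -/
def fillingFactor (α f : ℝ) : ℝ :=
  (1 - α * f) ^ α * (1 + (1 - α) * f) ^ (1 - α)

/-- Key AM–GM step: `g^α h^β ≤ (g')^α (h')^β (α g/g' + β h/h')`. -/
private lemma gm_step {α β g h g' h' : ℝ} (hα : 0 < α) (hβ : 0 < β)
    (hg : 0 ≤ g) (hh : 0 ≤ h) (hg' : 0 < g') (hh' : 0 < h') (hab : α + β = 1) :
    g ^ α * h ^ β ≤ g' ^ α * h' ^ β * (α * (g / g') + β * (h / h')) := by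
  have h1 : (g / g') ^ α * (h / h') ^ β ≤ α * (g / g') + β * (h / h') :=
    Real.geom_mean_le_arith_mean2_weighted hα.le hβ.le
      (div_nonneg hg hg'.le) (div_nonneg hh hh'.le) hab
  have e1 : g' ^ α ≠ 0 := (Real.rpow_pos_of_pos hg' α).ne'
  have e2 : h' ^ β ≠ 0 := (Real.rpow_pos_of_pos hh' β).ne'
  have h2 : g ^ α * h ^ β = g' ^ α * h' ^ β * ((g / g') ^ α * (h / h') ^ β) := by
    rw [Real.div_rpow hg hg'.le, Real.div_rpow hh hh'.le]
    field_simp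
  rw [h2]
  exact mul_le_mul_of_nonneg_left h1 (by positivity)

/-- Tilted AM–GM: if `α g/g' + β h/h' ≤ 1` then `g^α h^β ≤ (g')^α (h')^β`. -/
private lemma gm_le {α β g h g' h' : ℝ} (hα : 0 < α) (hβ : 0 < β)
    (hg : 0 ≤ g) (hh : 0 ≤ h) (hg' : 0 < g') (hh' : 0 < h') (hab : α + β = 1)
    (hle : α * (g / g') + β * (h / h') ≤ 1) :
    g ^ α * h ^ β ≤ g' ^ α * h' ^ β := by
  calc g ^ α * h ^ β ≤ g' ^ α * h' ^ β * (α * (g / g') + β * (h / h')) :=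
        gm_step hα hβ hg hh hg' hh' hab
    _ ≤ g' ^ α * h' ^ β * 1 := mul_le_mul_of_nonneg_left hle (by positivity)
    _ = g' ^ α * h' ^ β := mul_one _

/-- Concavity of the two-variable geometric mean along segments. -/
private lemma gm_concave_key {α β a b A B C D : ℝ} (hα : 0 < α) (hβ : 0 < β)
    (hab : α + β = 1) (hA : 0 ≤ A) (hB : 0 ≤ B) (hC : 0 ≤ C) (hD : 0 ≤ D)
    (ha : 0 < a) (hb : 0 < b) :
    a * (A ^ α * C ^ β) + b * (B ^ α * D ^ β) ≤
      (a * A + b * B) ^ α * (a * C + b * D) ^ β := by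
  have hG : 0 ≤ a * A + b * B := by positivity
  have hH : 0 ≤ a * C + b * D := by positivity
  rcases hG.eq_or_lt with hG0 | hGpos
  · -- then A = B = 0, so both sides vanish appropriately
    have hA0 : A = 0 := by nlinarith
    have hB0 : B = 0 := by nlinarith
    rw [hA0, hB0, Real.zero_rpow hα.ne']
    simp
    positivity
  rcases hH.eq_or_lt with hH0 | hHpos
  · have hC0 : C = 0 := by nlinarith
    have hD0 : D = 0 := by nlinarith
    rw [hC0, hD0, Real.zero_rpow hβ.ne']
    simp
    positivity
  have s1 := gm_step hα hβ hA hC hGpos hHpos hab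
  have s2 := gm_step hα hβ hB hD hGpos hHpos hab
  have esum : a * (α * (A / (a * A + b * B)) + β * (C / (a * C + b * D)))
      + b * (α * (B / (a * A + b * B)) + β * (D / (a * C + b * D)))
      = α * ((a * A + b * B) / (a * A + b * B))
        + β * ((a * C + b * D) / (a * C + b * D)) := by ring
  rw [div_self hGpos.ne', div_self hHpos.ne'] at esum
  calc a * (A ^ α * C ^ β) + b * (B ^ α * D ^ β)
      ≤ a * ((a * A + b * B) ^ α * (a * C + b * D) ^ β
            * (α * (A / (a * A + b * B)) + β * (C / (a * C + b * D))))
        + b * ((a * A + b * B) ^ α * (a * C + b * D) ^ β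
            * (α * (B / (a * A + b * B)) + β * (D / (a * C + b * D)))) :=
        add_le_add (mul_le_mul_of_nonneg_left s1 ha.le)
          (mul_le_mul_of_nonneg_left s2 hb.le)
    _ = (a * A + b * B) ^ α * (a * C + b * D) ^ β
          * (a * (α * (A / (a * A + b * B)) + β * (C / (a * C + b * D)))
            + b * (α * (B / (a * A + b * B)) + β * (D / (a * C + b * D)))) := by ring
    _ = (a * A + b * B) ^ α * (a * C + b * D) ^ β := by
        rw [esum]
        linear_combination ((a * A + b * B) ^ α * (a * C + b * D) ^ β) * hab

/-- the anyon filling factor is concave on `[0, 1/α]`, with maximum at `f = 0`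
if `α ≥ 1/2` and at `f = (1−2α)/(α(1−α))` if `α < 1/2`. -/
theorem fillingFactor_concave_and_max
    (α : ℝ) (hα : α ∈ Set.Ioo (0 : ℝ) 1) :
    ConcaveOn ℝ (Set.Icc 0 (1 / α)) (fillingFactor α)
    ∧ (1 / 2 ≤ α → ∀ f ∈ Set.Icc 0 (1 / α), fillingFactor α f ≤ fillingFactor α 0)
    ∧ (α < 1 / 2 → (1 - 2 * α) / (α * (1 - α)) ∈ Set.Icc 0 (1 / α) ∧
        ∀ f ∈ Set.Icc 0 (1 / α),
          fillingFactor α f ≤ fillingFactor α ((1 - 2 * α) / (α * (1 - α)))) := by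
  obtain ⟨hα0, hα1⟩ := hα
  have hβ0 : (0 : ℝ) < 1 - α := by linarith
  have hinv : α * (1 / α) = 1 := by field_simp
  -- nonnegativity of the two factors on the interval
  have hgnn : ∀ f ∈ Set.Icc (0 : ℝ) (1 / α), 0 ≤ 1 - α * f := by
    intro f hf
    have := mul_le_mul_of_nonneg_left hf.2 hα0.le
    linarith [hinv ▸ this]
  have hhnn : ∀ f ∈ Set.Icc (0 : ℝ) (1 / α), 0 ≤ 1 + (1 - α) * f := by
    intro f hf
    nlinarith [hf.1]
  refine ⟨?_, ?_, ?_⟩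
  · -- concavity
    refine ⟨convex_Icc 0 (1 / α), ?_⟩
    intro x hx y hy a b ha hb hab
    simp only [smul_eq_mul]
    rcases ha.eq_or_lt with ha0 | ha0
    · have hb1 : b = 1 := by linarith
      simp [← ha0, hb1]
    rcases hb.eq_or_lt with hb0 | hb0
    · have ha1 : a = 1 := by linarith
      simp [← hb0, ha1]
    unfold fillingFactor
    have e1 : 1 - α * (a * x + b * y) = a * (1 - α * x) + b * (1 - α * y) := by
      linear_combination (-(1 : ℝ)) * hab
    have e2 : 1 + (1 - α) * (a * x + b * y)
        = a * (1 + (1 - α) * x) + b * (1 + (1 - α) * y) := by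
      linear_combination (-(1 : ℝ)) * hab
    rw [e1, e2]
    exact gm_concave_key hα0 hβ0 (by ring) (hgnn x hx) (hgnn y hy)
      (hhnn x hx) (hhnn y hy) ha0 hb0
  · -- maximum at 0 when α ≥ 1/2
    intro hge f hf
    have hF0 : fillingFactor α 0 = 1 := by simp [fillingFactor]
    rw [hF0]
    unfold fillingFactor
    have h1 : (1 - α * f) ^ α * (1 + (1 - α) * f) ^ (1 - α)
        ≤ α * (1 - α * f) + (1 - α) * (1 + (1 - α) * f) :=
      Real.geom_mean_le_arith_mean2_weighted hα0.le hβ0.le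
        (hgnn f hf) (hhnn f hf) (by ring)
    nlinarith [hf.1]
  · -- maximum at (1-2α)/(α(1-α)) when α < 1/2
    intro hlt
    have hd : 0 < α * (1 - α) := by nlinarith
    have hnum : (0 : ℝ) ≤ 1 - 2 * α := by linarith
    have hmem : (1 - 2 * α) / (α * (1 - α)) ∈ Set.Icc (0 : ℝ) (1 / α) := by
      constructor
      · exact div_nonneg hnum hd.le
      · rw [div_le_div_iff₀ hd hα0]
        nlinarith [sq_nonneg α]
    refine ⟨hmem, ?_⟩
    intro f hf
    have eg : 1 - α * ((1 - 2 * α) / (α * (1 - α))) = α / (1 - α) := by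
      field_simp
      ring
    have eh : 1 + (1 - α) * ((1 - 2 * α) / (α * (1 - α))) = (1 - α) / α := by
      field_simp
      ring
    unfold fillingFactor
    rw [eg, eh]
    apply gm_le hα0 hβ0 (hgnn f hf) (hhnn f hf)
      (div_pos hα0 hβ0) (div_pos hβ0 hα0) (by ring)
    have : α * ((1 - α * f) / (α / (1 - α)))
        + (1 - α) * ((1 + (1 - α) * f) / ((1 - α) / α)) = 1 := by
      field_simp
      ring
    linarith [this.le]

end
end

section
/- Let α ∈ (0,1) and let F : [0, 1/α] → ℝ be the anyon filling factor F(f) = (1−αf)^α (1+(1−α)f)^{1−α}. Then F is Hölder continuous with exponent α on [0, 1/α], i.e., there exists C > 0 such that |F(x) − F(y)| ≤ C|x − y|^α for all x, y ∈ [0, 1/α]; however F is not Lipschitz continuous near f = 1/α: the derivative F'(f) tends to −∞ as f → (1/α)⁻. -/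
/-!
Write `F = g * h` with `g f = (1 - α f) ^ α` and `h f = (1 + (1 - α) f) ^ (1 - α)`. Subadditivity
of `t ↦ t ^ α` on `[0, ∞)` makes `g` `α`-Hölder with constant `1`, while `h` is `1`-Lipschitz since
its base stays `≥ 1`; on an interval of length `1 / α` Lipschitz implies `α`-Hölder, and a product
of bounded Hölder functions is Hölder. In `F'` the term `-α² (1 - α f) ^ (α - 1) h f` tends to
`-∞` since `α - 1 < 0`, while the remaining term `(1 - α)² g f (1 + (1 - α) f) ^ (-α)` tends to `0`.
-/

noncomputable section

open Set Filter Topology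

namespace Real

theorem abs_rpow_sub_rpow_le_abs_sub_rpow {a b p : ℝ} (ha : 0 ≤ a) (hb : 0 ≤ b) (hp0 : 0 ≤ p)
    (hp1 : p ≤ 1) : |a ^ p - b ^ p| ≤ |a - b| ^ p := by
  wlog hba : b ≤ a generalizing a b
  · rw [abs_sub_comm, abs_sub_comm a]
    exact this hb ha (le_of_not_ge hba)
  have hsub : a ^ p ≤ (a - b) ^ p + b ^ p := by
    simpa using rpow_add_le_add_rpow (sub_nonneg.2 hba) hb hp0 hp1
  rw [abs_of_nonneg (sub_nonneg.2 (rpow_le_rpow hb hba hp0)), abs_of_nonneg (sub_nonneg.2 hba)]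
  linarith

theorem abs_rpow_sub_rpow_le_mul_abs_sub {a b p : ℝ} (ha : 1 ≤ a) (hb : 1 ≤ b) (hp0 : 0 ≤ p)
    (hp1 : p ≤ 1) : |a ^ p - b ^ p| ≤ p * |a - b| := by
  have hderiv : ∀ x ∈ Ici (1 : ℝ), HasDerivWithinAt (· ^ p) (p * x ^ (p - 1)) (Ici 1) x :=
    fun x hx => (hasDerivAt_rpow_const (Or.inl (by linarith [mem_Ici.1 hx]))).hasDerivWithinAt
  have hbound : ∀ x ∈ Ici (1 : ℝ), ‖p * x ^ (p - 1)‖ ≤ p := fun x hx => by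
    rw [norm_mul, norm_of_nonneg hp0, norm_of_nonneg (rpow_nonneg (by linarith [mem_Ici.1 hx]) _)]
    exact mul_le_of_le_one_right hp0 (rpow_le_one_of_one_le_of_nonpos hx (by linarith))
  simpa using (convex_Ici 1).norm_image_sub_le_of_norm_hasDerivWithin_le hderiv hbound hb ha

theorem le_rpow_one_sub_mul_rpow {t D p : ℝ} (ht : 0 ≤ t) (htD : t ≤ D) (hp : p ≤ 1) :
    t ≤ D ^ (1 - p) * t ^ p := by
  calc t = t ^ (1 - p) * t ^ p := by rw [← rpow_add' ht (by norm_num)]; simp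
    _ ≤ D ^ (1 - p) * t ^ p := by gcongr

end Real

theorem abs_mul_sub_mul_le {R : Type*} [Ring R] [LinearOrder R] [IsStrictOrderedRing R]
    (a b c d : R) : |a * b - c * d| ≤ |a - c| * |b| + |c| * |b - d| := by
  calc |a * b - c * d| = |(a - c) * b + c * (b - d)| := by noncomm_ring
    _ ≤ |a - c| * |b| + |c| * |b - d| := by
      rw [← abs_mul, ← abs_mul]; exact abs_add_le _ _

section

variable {α : ℝ}

open Real

theorem one_sub_mul_mem_Icc_and_one_add_mul_mem_Icc (hα0 : 0 < α) (hα1 : α < 1) {z : ℝ}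
    (hz : z ∈ Icc 0 (1 / α)) :
    1 - α * z ∈ Icc 0 1 ∧ 1 + (1 - α) * z ∈ Icc 1 (1 / α) := by
  have hαz : α * z ≤ 1 := (le_div_iff₀' hα0).1 hz.2
  refine ⟨⟨by linarith, by nlinarith [hz.1]⟩, ⟨by nlinarith [hz.1], (le_div_iff₀' hα0).2 ?_⟩⟩
  nlinarith

theorem abs_one_sub_mul_rpow_sub_le (hα0 : 0 < α) (hα1 : α ≤ 1) {x y : ℝ}
    (hx : 0 ≤ 1 - α * x) (hy : 0 ≤ 1 - α * y) :
    |(1 - α * x) ^ α - (1 - α * y) ^ α| ≤ |x - y| ^ α :=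
  calc |(1 - α * x) ^ α - (1 - α * y) ^ α| ≤ |(1 - α * x) - (1 - α * y)| ^ α :=
        abs_rpow_sub_rpow_le_abs_sub_rpow hx hy hα0.le hα1
    _ = α ^ α * |x - y| ^ α := by
        rw [show (1 - α * x) - (1 - α * y) = α * (y - x) by ring, abs_mul, abs_of_pos hα0,
          mul_rpow hα0.le (abs_nonneg _), abs_sub_comm]
    _ ≤ |x - y| ^ α := mul_le_of_le_one_left (by positivity) (rpow_le_one hα0.le hα1 hα0.le)

theorem abs_one_add_mul_rpow_sub_le (hα0 : 0 ≤ α) (hα1 : α ≤ 1) {x y : ℝ} (hx : 0 ≤ x)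
    (hy : 0 ≤ y) :
    |(1 + (1 - α) * x) ^ (1 - α) - (1 + (1 - α) * y) ^ (1 - α)| ≤ |x - y| :=
  calc _ ≤ (1 - α) * |(1 + (1 - α) * x) - (1 + (1 - α) * y)| :=
        abs_rpow_sub_rpow_le_mul_abs_sub (by nlinarith) (by nlinarith) (by linarith) (by linarith)
    _ = (1 - α) * (1 - α) * |x - y| := by
        rw [show (1 + (1 - α) * x) - (1 + (1 - α) * y) = (1 - α) * (x - y) by ring, abs_mul,
          abs_of_nonneg (by linarith : 0 ≤ 1 - α), mul_assoc]
    _ ≤ |x - y| := mul_le_of_le_one_left (abs_nonneg _) (by nlinarith)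

theorem abs_fillingFactor_sub_le (hα0 : 0 < α) (hα1 : α < 1) {x y : ℝ}
    (hx : x ∈ Icc 0 (1 / α)) (hy : y ∈ Icc 0 (1 / α)) :
    |fillingFactor α x - fillingFactor α y| ≤ 2 / α * |x - y| ^ α := by
  obtain ⟨⟨hux, -⟩, ⟨hvx, hvx'⟩⟩ := one_sub_mul_mem_Icc_and_one_add_mul_mem_Icc hα0 hα1 hx
  obtain ⟨⟨huy, huy'⟩, -⟩ := one_sub_mul_mem_Icc_and_one_add_mul_mem_Icc hα0 hα1 hy
  have hg := abs_one_sub_mul_rpow_sub_le hα0 hα1.le hux huy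
  have hh := abs_one_add_mul_rpow_sub_le hα0.le hα1.le hx.1 hy.1
  have hhx : (1 + (1 - α) * x) ^ (1 - α) ≤ 1 / α :=
    (rpow_le_self_of_one_le hvx (by linarith)).trans hvx'
  have hgy : (1 - α * y) ^ α ≤ 1 := rpow_le_one huy huy' hα0.le
  have hxy : |x - y| ≤ 1 / α * |x - y| ^ α := by
    have hD : |x - y| ≤ 1 / α :=
      abs_sub_le_iff.2 ⟨by linarith [hx.2, hy.1], by linarith [hx.1, hy.2]⟩
    calc |x - y| ≤ (1 / α) ^ (1 - α) * |x - y| ^ α :=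
          le_rpow_one_sub_mul_rpow (abs_nonneg _) hD hα1.le
      _ ≤ 1 / α * |x - y| ^ α := by
          gcongr
          exact rpow_le_self_of_one_le (by rw [le_div_iff₀ hα0]; linarith) (by linarith)
  calc |fillingFactor α x - fillingFactor α y|
      ≤ |(1 - α * x) ^ α - (1 - α * y) ^ α| * |(1 + (1 - α) * x) ^ (1 - α)|
        + |(1 - α * y) ^ α| * |(1 + (1 - α) * x) ^ (1 - α) - (1 + (1 - α) * y) ^ (1 - α)| :=
        abs_mul_sub_mul_le _ _ _ _
    _ ≤ |x - y| ^ α * (1 / α) + 1 * (1 / α * |x - y| ^ α) := by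
        rw [abs_of_nonneg (rpow_nonneg (by linarith) _), abs_of_nonneg (rpow_nonneg huy _)]
        exact add_le_add (mul_le_mul hg hhx (by positivity) (by positivity))
          (mul_le_mul hgy (hh.trans hxy) (abs_nonneg _) zero_le_one)
    _ = 2 / α * |x - y| ^ α := by ring

theorem hasDerivAt_fillingFactor {f : ℝ} (hu : 1 - α * f ≠ 0) (hv : 1 + (1 - α) * f ≠ 0) :
    HasDerivAt (fillingFactor α)
      (-α ^ 2 * (1 - α * f) ^ (α - 1) * (1 + (1 - α) * f) ^ (1 - α)
        + (1 - α) ^ 2 * (1 - α * f) ^ α * (1 + (1 - α) * f) ^ (-α)) f := by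
  have hu' : HasDerivAt (fun f => 1 - α * f) (-α) f := by
    simpa using ((hasDerivAt_id f).const_mul α).const_sub 1
  have hv' : HasDerivAt (fun f => 1 + (1 - α) * f) (1 - α) f := by
    simpa using ((hasDerivAt_id f).const_mul (1 - α)).const_add 1
  refine ((hu'.rpow_const (p := α) (Or.inl hu)).mul
    (hv'.rpow_const (p := 1 - α) (Or.inl hv))).congr_deriv ?_
  rw [show 1 - α - 1 = -α by ring]
  ring

theorem tendsto_one_sub_mul_nhdsLT_inv (hα : 0 < α) :
    Tendsto (fun f => 1 - α * f) (𝓝[<] (1 / α)) (𝓝[>] 0) := by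
  have hcont : Continuous (fun f => 1 - α * f) := by fun_prop
  have := hcont.continuousWithinAt.tendsto_nhdsWithin (s := Iio (1 / α)) (x := 1 / α) (t := Ioi 0)
    fun f (hf : f < 1 / α) => show 0 < 1 - α * f by linarith [(lt_div_iff₀' hα).1 hf]
  simpa [hα.ne'] using this

theorem tendsto_deriv_fillingFactor_atBot (hα0 : 0 < α) (hα1 : α < 1) :
    Tendsto (deriv (fillingFactor α)) (𝓝[<] (1 / α)) atBot := by
  have hu := tendsto_one_sub_mul_nhdsLT_inv hα0
  have hv : Tendsto (fun f => 1 + (1 - α) * f) (𝓝[<] (1 / α)) (𝓝 (1 / α)) := by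
    have : Tendsto (fun f => 1 + (1 - α) * f) (𝓝 (1 / α)) (𝓝 (1 + (1 - α) * (1 / α))) :=
      (by fun_prop : Continuous fun f => 1 + (1 - α) * f).tendsto _
    rw [show 1 + (1 - α) * (1 / α) = 1 / α by field_simp; ring] at this
    exact this.mono_left nhdsWithin_le_nhds
  have hv_rpow (p : ℝ) : Tendsto (fun f => (1 + (1 - α) * f) ^ p) (𝓝[<] (1 / α))
      (𝓝 ((1 / α) ^ p)) :=
    (continuousAt_rpow_const _ _ (Or.inl (by positivity))).tendsto.comp hv
  have hblowup : Tendsto (fun f => -α ^ 2 * (1 - α * f) ^ (α - 1) * (1 + (1 - α) * f) ^ (1 - α))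
      (𝓝[<] (1 / α)) atBot :=
    (((tendsto_rpow_neg_nhdsGT_zero (by linarith)).comp hu).const_mul_atTop_of_neg
      (by nlinarith)).atBot_mul_pos (by positivity) (hv_rpow _)
  have hvanish : Tendsto (fun f => (1 - α) ^ 2 * (1 - α * f) ^ α * (1 + (1 - α) * f) ^ (-α))
      (𝓝[<] (1 / α)) (𝓝 0) := by
    have h0 : Tendsto (fun u : ℝ => u ^ α) (𝓝[>] 0) (𝓝 0) := by
      simpa [zero_rpow hα0.ne'] using
        (continuousAt_rpow_const 0 α (Or.inr hα0.le)).tendsto.mono_left nhdsWithin_le_nhds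
    simpa using ((h0.comp hu).const_mul ((1 - α) ^ 2)).mul (hv_rpow (-α))
  have hderiv : deriv (fillingFactor α) =ᶠ[𝓝[<] (1 / α)] fun f =>
      -α ^ 2 * (1 - α * f) ^ (α - 1) * (1 + (1 - α) * f) ^ (1 - α)
        + (1 - α) ^ 2 * (1 - α * f) ^ α * (1 + (1 - α) * f) ^ (-α) := by
    filter_upwards [Ioo_mem_nhdsLT (by positivity : (0 : ℝ) < 1 / α)] with f hf
    have hαf : α * f < 1 := (lt_div_iff₀' hα0).1 hf.2
    exact (hasDerivAt_fillingFactor (by linarith) (by nlinarith [hf.1])).deriv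
  exact (hblowup.atBot_add hvanish).congr' hderiv.symm

end

/-- the anyon filling factor is `α`-Hölder continuous on `[0, 1/α]`,
but not Lipschitz near `f = 1/α`: its derivative tends to `−∞` as `f → (1/α)⁻`. -/
theorem fillingFactor_holder_not_lipschitz
    (α : ℝ) (hα : α ∈ Set.Ioo (0 : ℝ) 1) :
    (∃ C : ℝ, 0 < C ∧ ∀ x ∈ Set.Icc 0 (1 / α), ∀ y ∈ Set.Icc 0 (1 / α),
      |fillingFactor α x - fillingFactor α y| ≤ C * |x - y| ^ α)
    ∧ Filter.Tendsto (fun f => deriv (fillingFactor α) f)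
        (nhdsWithin (1 / α) (Set.Iio (1 / α))) Filter.atBot := by
  obtain ⟨hα0, hα1⟩ := hα
  exact ⟨⟨2 / α, by positivity, fun x hx y hy => abs_fillingFactor_sub_le hα0 hα1 hx hy⟩,
    tendsto_deriv_fillingFactor_atBot hα0 hα1⟩

end
end

section
/- Let d ≥ 2, α ∈ (0,1), δ ∈ (0, 1/(2α)), and let B ≥ 0 be a measurable collision kernel with B(z,ω) depending only on |z| and |z·ω|. Let f : ℝ^d → [δ, 1/α − δ] be measurable such that the function (v, v_*, ω) ↦ B(v−v_*, ω) is integrable against the relevant products of f and F(f) at the four velocities, so that Q(f) and the entropy production integral below are absolutely convergent. Then the entropy production of the anyon Boltzmann collision operator is nonpositive: ∫_{ℝ^d} Q(f)(v) · log( f(v)/F(f(v)) ) dv ≤ 0, with equality if and only if f(v') f(v'_*) F(f(v)) F(f(v_*)) = f(v) f(v_*) F(f(v')) F(f(v'_*)) holds B-almost everywhere. -/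
/-!
Write `G = f' f'_* F(f) F(f_*)` and `H = f f_* F(f') F(f'_*)`, so the bracket is `G − H`.
The swap `(v, v_*) ↦ (v_*, v)` and the collision map `(v, v_*) ↦ (v', v'_*)` preserve
`dv dv_* dω` (the latter is a linear involution, hence has determinant `±1`) and the kernel `B`,
while they leave `G − H` unchanged, respectively change its sign. Averaging over the four images
gives the weak form `4 ∫ Q(f) φ = −∫ B (G − H)(φ' + φ'_* − φ − φ_*)`. For `φ = log (f / F(f))`
the last factor is `log G − log H`, and `(G − H)(log G − log H) ≥ 0` with equality iff `G = H`.
Since `f` takes values in `[δ, 1/α − δ]`, `φ` is bounded, so all these integrals converge.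
-/

open MeasureTheory Metric Set Filter

noncomputable section

/-- Post-collisional velocity `v' = v − ω((v−v_*)·ω)`. -/
def vPost {d : ℕ} (v w ω : EuclideanSpace ℝ (Fin d)) : EuclideanSpace ℝ (Fin d) :=
  v - (inner ℝ (v - w) ω : ℝ) • ω

/-- Post-collisional velocity `v'_* = v_* + ω((v−v_*)·ω)`. -/
def vPostStar {d : ℕ} (v w ω : EuclideanSpace ℝ (Fin d)) : EuclideanSpace ℝ (Fin d) :=
  w + (inner ℝ (v - w) ω : ℝ) • ω

/-- The bracket `f' f'_* F(f) F(f_*) − f f_* F(f') F(f'_*)` in the anyon collision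
operator. -/
def anyonBracket {d : ℕ} (α : ℝ) (f : EuclideanSpace ℝ (Fin d) → ℝ)
    (v w ω : EuclideanSpace ℝ (Fin d)) : ℝ :=
  f (vPost v w ω) * f (vPostStar v w ω) * fillingFactor α (f v) * fillingFactor α (f w)
    - f v * f w * fillingFactor α (f (vPost v w ω)) * fillingFactor α (f (vPostStar v w ω))

/-- The uniform probability measure on the unit sphere `S^{d−1}`. -/
def sphereUnif (d : ℕ) : Measure (sphere (0 : EuclideanSpace ℝ (Fin d)) 1) :=
  ((volume : Measure (EuclideanSpace ℝ (Fin d))).toSphere univ)⁻¹ •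
    (volume : Measure (EuclideanSpace ℝ (Fin d))).toSphere

/-- The anyon (Haldane-statistics) Boltzmann collision operator. -/
def anyonQ {d : ℕ} (α : ℝ)
    (B : EuclideanSpace ℝ (Fin d) → EuclideanSpace ℝ (Fin d) → ℝ)
    (f : EuclideanSpace ℝ (Fin d) → ℝ) (v : EuclideanSpace ℝ (Fin d)) : ℝ :=
  ∫ p : EuclideanSpace ℝ (Fin d) × sphere (0 : EuclideanSpace ℝ (Fin d)) 1,
    B (v - p.1) (p.2 : EuclideanSpace ℝ (Fin d))
      * anyonBracket α f v p.1 (p.2 : EuclideanSpace ℝ (Fin d))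
    ∂((volume : Measure (EuclideanSpace ℝ (Fin d))).prod (sphereUnif d))

/-- The absolute-value counterpart of the collision bracket, used to state
integrability. -/
def anyonBracketAbs {d : ℕ} (α : ℝ) (f : EuclideanSpace ℝ (Fin d) → ℝ)
    (v w ω : EuclideanSpace ℝ (Fin d)) : ℝ :=
  f (vPost v w ω) * f (vPostStar v w ω) * fillingFactor α (f v) * fillingFactor α (f w)
    + f v * f w * fillingFactor α (f (vPost v w ω)) * fillingFactor α (f (vPostStar v w ω))

section Collision

variable {d : ℕ} {v w ω : EuclideanSpace ℝ (Fin d)}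

lemma vPost_swap (v w ω : EuclideanSpace ℝ (Fin d)) : vPost w v ω = vPostStar v w ω := by
  rw [vPost, vPostStar, ← neg_sub v w, inner_neg_left, neg_smul, sub_neg_eq_add]

lemma vPostStar_swap (v w ω : EuclideanSpace ℝ (Fin d)) : vPostStar w v ω = vPost v w ω := by
  rw [vPost, vPostStar, ← neg_sub v w, inner_neg_left, neg_smul, ← sub_eq_add_neg]

lemma vPost_sub_vPostStar (v w ω : EuclideanSpace ℝ (Fin d)) :
    vPost v w ω - vPostStar v w ω = (v - w) - (2 * inner ℝ (v - w) ω) • ω := by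
  rw [vPost, vPostStar]; module

lemma inner_vPost_sub_vPostStar (hω : ‖ω‖ = 1) :
    inner ℝ (vPost v w ω - vPostStar v w ω) ω = -inner ℝ (v - w) ω := by
  rw [vPost_sub_vPostStar, inner_sub_left, real_inner_smul_left, real_inner_self_eq_norm_sq, hω]
  ring

lemma norm_vPost_sub_vPostStar (hω : ‖ω‖ = 1) : ‖vPost v w ω - vPostStar v w ω‖ = ‖v - w‖ := by
  rw [← sq_eq_sq₀ (norm_nonneg _) (norm_nonneg _), vPost_sub_vPostStar, norm_sub_sq_real,
    real_inner_smul_right, norm_smul, real_inner_comm, Real.norm_eq_abs, mul_pow, sq_abs, hω]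
  ring

lemma vPost_vPost_vPostStar (hω : ‖ω‖ = 1) : vPost (vPost v w ω) (vPostStar v w ω) ω = v := by
  rw [vPost, inner_vPost_sub_vPostStar hω, vPost]; module

lemma vPostStar_vPost_vPostStar (hω : ‖ω‖ = 1) :
    vPostStar (vPost v w ω) (vPostStar v w ω) ω = w := by
  rw [vPostStar, inner_vPost_sub_vPostStar hω, vPostStar]; module

def collisionLinearMap (ω : EuclideanSpace ℝ (Fin d)) :
    (EuclideanSpace ℝ (Fin d) × EuclideanSpace ℝ (Fin d)) →ₗ[ℝ]
      EuclideanSpace ℝ (Fin d) × EuclideanSpace ℝ (Fin d) :=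
  LinearMap.id - ((innerₛₗ ℝ ω).comp (LinearMap.fst ℝ _ _ - LinearMap.snd ℝ _ _)).smulRight (ω, -ω)

lemma collisionLinearMap_apply (ω : EuclideanSpace ℝ (Fin d))
    (x : EuclideanSpace ℝ (Fin d) × EuclideanSpace ℝ (Fin d)) :
    collisionLinearMap ω x = (vPost x.1 x.2 ω, vPostStar x.1 x.2 ω) := by
  ext1 <;> simp [collisionLinearMap, vPost, vPostStar, real_inner_comm ω, sub_eq_add_neg]

lemma collisionLinearMap_comp_self (hω : ‖ω‖ = 1) :
    (collisionLinearMap ω).comp (collisionLinearMap ω) = LinearMap.id :=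
  LinearMap.ext fun x => by
    simp [collisionLinearMap_apply, vPost_vPost_vPostStar hω, vPostStar_vPost_vPostStar hω]

lemma abs_det_collisionLinearMap (hω : ‖ω‖ = 1) : |LinearMap.det (collisionLinearMap ω)| = 1 := by
  have h : LinearMap.det (collisionLinearMap ω) * LinearMap.det (collisionLinearMap ω) = 1 := by
    rw [← LinearMap.det_comp, collisionLinearMap_comp_self hω, LinearMap.det_id]
  rcases mul_self_eq_one_iff.mp h with h | h <;> simp [h]

end Collision

section MeasurePreserving

variable {d : ℕ}

lemma map_collisionLinearMap_volume {ω : EuclideanSpace ℝ (Fin d)} (hω : ‖ω‖ = 1) :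
    ((volume : Measure (EuclideanSpace ℝ (Fin d))).prod volume).map (collisionLinearMap ω) =
      volume.prod volume := by
  have hdet : LinearMap.det (collisionLinearMap ω) ≠ 0 := by
    simpa using (abs_det_collisionLinearMap hω).trans_ne one_ne_zero
  rw [Measure.map_linearMap_addHaar_eq_smul_addHaar _ hdet, abs_inv,
    abs_det_collisionLinearMap hω, inv_one, ENNReal.ofReal_one, one_smul]

abbrev CollisionSpace (d : ℕ) : Type :=
  EuclideanSpace ℝ (Fin d) × (EuclideanSpace ℝ (Fin d) × sphere (0 : EuclideanSpace ℝ (Fin d)) 1)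

abbrev collisionMeasure (ν : Measure (sphere (0 : EuclideanSpace ℝ (Fin d)) 1)) :
    Measure (CollisionSpace d) :=
  (volume : Measure (EuclideanSpace ℝ (Fin d))).prod
    ((volume : Measure (EuclideanSpace ℝ (Fin d))).prod ν)

def velocitySwap (p : CollisionSpace d) : CollisionSpace d :=
  (p.2.1, (p.1, p.2.2))

def collisionMap (p : CollisionSpace d) : CollisionSpace d :=
  (vPost p.1 p.2.1 p.2.2, (vPostStar p.1 p.2.1 p.2.2, p.2.2))

variable (ν : Measure (sphere (0 : EuclideanSpace ℝ (Fin d)) 1)) [SFinite ν]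

lemma measurePreserving_velocitySwap :
    MeasurePreserving velocitySwap (collisionMeasure ν) (collisionMeasure ν) := by
  have assoc := measurePreserving_prodAssoc (volume : Measure (EuclideanSpace ℝ (Fin d)))
    (volume : Measure (EuclideanSpace ℝ (Fin d))) ν
  exact assoc.comp ((Measure.measurePreserving_swap.prod (.id ν)).comp
    (assoc.symm MeasurableEquiv.prodAssoc))

lemma measurePreserving_collisionMap :
    MeasurePreserving collisionMap (collisionMeasure ν) (collisionMeasure ν) := by
  have assoc := measurePreserving_prodAssoc (volume : Measure (EuclideanSpace ℝ (Fin d)))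
    (volume : Measure (EuclideanSpace ℝ (Fin d))) ν
  have hmeas : Measurable (Function.uncurry fun (ω : sphere (0 : EuclideanSpace ℝ (Fin d)) 1) x =>
      collisionLinearMap (ω : EuclideanSpace ℝ (Fin d)) x) := by
    simp only [collisionLinearMap_apply, vPost, vPostStar]
    fun_prop
  have collide := (MeasurePreserving.id ν).skew_product (μc := volume.prod volume) hmeas
    (ae_of_all _ fun ω => map_collisionLinearMap_volume (norm_eq_of_mem_sphere ω))
  convert assoc.comp (Measure.measurePreserving_swap.comp (collide.comp
    (Measure.measurePreserving_swap.comp (assoc.symm MeasurableEquiv.prodAssoc)))) using 1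
  ext p <;> simp [collisionMap, collisionLinearMap_apply, MeasurableEquiv.prodAssoc]

end MeasurePreserving

section Symmetrization

variable {X : Type*} {T₁ T₂ : X → X} {w φ : X → ℝ}

lemma mul_symmetrization_eq (hw₁ : ∀ x, w (T₁ x) = w x) (hw₂ : ∀ x, w (T₂ x) = -w x) (x : X) :
    w x * (φ (T₂ x) + φ (T₁ (T₂ x)) - φ x - φ (T₁ x)) =
      -(w x * φ x + w (T₁ x) * φ (T₁ x) + w (T₂ x) * φ (T₂ x)
        + w (T₁ (T₂ x)) * φ (T₁ (T₂ x))) := by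
  rw [hw₁, hw₁, hw₂]; ring

variable [MeasurableSpace X] {μ : Measure X}

lemma MeasureTheory.MeasurePreserving.integral_comp_of_aestronglyMeasurable {Y : Type*}
    [MeasurableSpace Y] {ν : Measure Y} {T : X → Y} (hT : MeasurePreserving T μ ν) {g : Y → ℝ}
    (hg : AEStronglyMeasurable g ν) : ∫ x, g (T x) ∂μ = ∫ y, g y ∂ν := by
  rw [← integral_map hT.measurable.aemeasurable (by rwa [hT.map_eq]), hT.map_eq]

variable (h₁ : MeasurePreserving T₁ μ μ) (h₂ : MeasurePreserving T₂ μ μ)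
  (hw₁ : ∀ x, w (T₁ x) = w x) (hw₂ : ∀ x, w (T₂ x) = -w x)
  (hint : Integrable (fun x => w x * φ x) μ)
include h₁ h₂ hw₁ hw₂ hint

lemma integrable_mul_symmetrization :
    Integrable (fun x => w x * (φ (T₂ x) + φ (T₁ (T₂ x)) - φ x - φ (T₁ x))) μ := by
  simp only [mul_symmetrization_eq hw₁ hw₂]
  exact (((hint.add (h₁.integrable_comp_of_integrable hint)).add
    (h₂.integrable_comp_of_integrable hint)).add
    ((h₁.comp h₂).integrable_comp_of_integrable hint)).neg

lemma four_mul_integral_mul_eq_neg_integral_mul_symmetrization :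
    4 * ∫ x, w x * φ x ∂μ = -∫ x, w x * (φ (T₂ x) + φ (T₁ (T₂ x)) - φ x - φ (T₁ x)) ∂μ := by
  have hcomp {T : X → X} (hT : MeasurePreserving T μ μ) :
      Integrable (fun x => w (T x) * φ (T x)) μ := hT.integrable_comp_of_integrable hint
  have hinv {T : X → X} (hT : MeasurePreserving T μ μ) :
      ∫ x, w (T x) * φ (T x) ∂μ = ∫ x, w x * φ x ∂μ :=
    hT.integral_comp_of_aestronglyMeasurable hint.aestronglyMeasurable
  simp only [mul_symmetrization_eq hw₁ hw₂, integral_neg, neg_neg]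
  have h₁₂ : MeasurePreserving (fun x => T₁ (T₂ x)) μ μ := h₁.comp h₂
  rw [integral_add _ (hcomp h₁₂), integral_add _ (hcomp h₂), integral_add hint (hcomp h₁),
    hinv h₁, hinv h₂, hinv h₁₂]
  · ring
  · exact hint.add (hcomp h₁)
  · exact (hint.add (hcomp h₁)).add (hcomp h₂)

variable (hD : ∀ x, 0 ≤ w x * (φ (T₂ x) + φ (T₁ (T₂ x)) - φ x - φ (T₁ x)))
include hD

lemma integral_mul_nonpos_of_symmetrization_nonneg : ∫ x, w x * φ x ∂μ ≤ 0 := by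
  have h₀ : 0 ≤ ∫ x, w x * (φ (T₂ x) + φ (T₁ (T₂ x)) - φ x - φ (T₁ x)) ∂μ := integral_nonneg hD
  linarith [four_mul_integral_mul_eq_neg_integral_mul_symmetrization h₁ h₂ hw₁ hw₂ hint]

lemma integral_mul_eq_zero_iff_of_symmetrization_nonneg :
    ∫ x, w x * φ x ∂μ = 0 ↔
      ∀ᵐ x ∂μ, w x * (φ (T₂ x) + φ (T₁ (T₂ x)) - φ x - φ (T₁ x)) = 0 := by
  have h₀ : ∫ x, w x * (φ (T₂ x) + φ (T₁ (T₂ x)) - φ x - φ (T₁ x)) ∂μ = 0 ↔ _ :=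
    integral_eq_zero_iff_of_nonneg hD (integrable_mul_symmetrization h₁ h₂ hw₁ hw₂ hint)
  have h₄ := four_mul_integral_mul_eq_neg_integral_mul_symmetrization h₁ h₂ hw₁ hw₂ hint
  exact ⟨fun h => h₀.1 (by linarith), fun h => by linarith [h₀.2 h]⟩

end Symmetrization

section FillingFactor

lemma sub_mul_log_sub_log_nonneg {x y : ℝ} (hx : 0 < x) (hy : 0 < y) :
    0 ≤ (x - y) * (Real.log x - Real.log y) := by
  rcases le_total x y with h | h
  · exact mul_nonneg_of_nonpos_of_nonpos (sub_nonpos.2 h) (sub_nonpos.2 (Real.log_le_log hx h))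
  · exact mul_nonneg (sub_nonneg.2 h) (sub_nonneg.2 (Real.log_le_log hy h))

lemma sub_mul_log_sub_log_eq_zero_iff {x y : ℝ} (hx : 0 < x) (hy : 0 < y) :
    (x - y) * (Real.log x - Real.log y) = 0 ↔ x = y := by
  rw [mul_eq_zero, sub_eq_zero, sub_eq_zero, or_iff_left_of_imp (Real.log_injOn_pos hx hy)]

variable {α δ t : ℝ}

lemma measurable_fillingFactor (α : ℝ) : Measurable (fillingFactor α) := by
  unfold fillingFactor; fun_prop

lemma continuous_fillingFactor (h₀ : 0 ≤ α) (h₁ : α ≤ 1) : Continuous (fillingFactor α) := by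
  unfold fillingFactor; fun_prop (disch := linarith)

lemma fillingFactor_pos_of_mem_Icc (hα : α ∈ Ioo 0 1) (hδ : 0 < δ) (ht : t ∈ Icc δ (1 / α - δ)) :
    0 < fillingFactor α t := by
  have h₁ : 0 < 1 - α * t := by
    have := mul_le_mul_of_nonneg_left ht.2 hα.1.le
    rw [mul_sub, mul_one_div_cancel hα.1.ne'] at this
    nlinarith [hα.1]
  have h₂ : 0 < 1 + (1 - α) * t := by nlinarith [hα.2, ht.1]
  exact mul_pos (Real.rpow_pos_of_pos h₁ _) (Real.rpow_pos_of_pos h₂ _)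

lemma exists_abs_log_div_fillingFactor_le (hα : α ∈ Ioo 0 1) (hδ : 0 < δ) :
    ∃ M, ∀ t ∈ Icc δ (1 / α - δ), |Real.log (t / fillingFactor α t)| ≤ M := by
  have hF := continuous_fillingFactor hα.1.le hα.2.le
  have hcont : ContinuousOn (fun t => Real.log (t / fillingFactor α t)) (Icc δ (1 / α - δ)) :=
    (continuousOn_id.div hF.continuousOn
      fun t ht => (fillingFactor_pos_of_mem_Icc hα hδ ht).ne').log
      fun t ht => (div_pos (hδ.trans_le ht.1) (fillingFactor_pos_of_mem_Icc hα hδ ht)).ne'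
  obtain ⟨M, hM⟩ := isCompact_Icc.exists_bound_of_continuousOn hcont
  exact ⟨M, fun t ht => by simpa using hM t ht⟩

end FillingFactor

section CollisionWeight

variable {d : ℕ} {α : ℝ} {B : EuclideanSpace ℝ (Fin d) → EuclideanSpace ℝ (Fin d) → ℝ}
  {f : EuclideanSpace ℝ (Fin d) → ℝ}

def anyonGain (α : ℝ) (f : EuclideanSpace ℝ (Fin d) → ℝ) (v w ω : EuclideanSpace ℝ (Fin d)) : ℝ :=
  f (vPost v w ω) * f (vPostStar v w ω) * fillingFactor α (f v) * fillingFactor α (f w)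

def anyonLoss (α : ℝ) (f : EuclideanSpace ℝ (Fin d) → ℝ) (v w ω : EuclideanSpace ℝ (Fin d)) : ℝ :=
  f v * f w * fillingFactor α (f (vPost v w ω)) * fillingFactor α (f (vPostStar v w ω))

def anyonLogRatio (α : ℝ) (f : EuclideanSpace ℝ (Fin d) → ℝ) (v : EuclideanSpace ℝ (Fin d)) : ℝ :=
  Real.log (f v / fillingFactor α (f v))

lemma anyonBracket_eq_sub (α : ℝ) (f : EuclideanSpace ℝ (Fin d) → ℝ)
    (v w ω : EuclideanSpace ℝ (Fin d)) :
    anyonBracket α f v w ω = anyonGain α f v w ω - anyonLoss α f v w ω := rfl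

lemma anyonBracketAbs_eq_add (α : ℝ) (f : EuclideanSpace ℝ (Fin d) → ℝ)
    (v w ω : EuclideanSpace ℝ (Fin d)) :
    anyonBracketAbs α f v w ω = anyonGain α f v w ω + anyonLoss α f v w ω := rfl

section Positive

variable (hf : ∀ v, 0 < f v) (hF : ∀ v, 0 < fillingFactor α (f v))
include hf hF

lemma anyonGain_pos (v w ω : EuclideanSpace ℝ (Fin d)) : 0 < anyonGain α f v w ω :=
  mul_pos (mul_pos (mul_pos (hf _) (hf _)) (hF _)) (hF _)

lemma anyonLoss_pos (v w ω : EuclideanSpace ℝ (Fin d)) : 0 < anyonLoss α f v w ω :=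
  mul_pos (mul_pos (mul_pos (hf _) (hf _)) (hF _)) (hF _)

lemma abs_anyonBracket_le (v w ω : EuclideanSpace ℝ (Fin d)) :
    |anyonBracket α f v w ω| ≤ anyonBracketAbs α f v w ω := by
  rw [anyonBracket_eq_sub, anyonBracketAbs_eq_add]
  exact (abs_sub _ _).trans_eq (by
    rw [abs_of_pos (anyonGain_pos hf hF _ _ _), abs_of_pos (anyonLoss_pos hf hF _ _ _)])

lemma log_anyonGain_sub_log_anyonLoss (v w ω : EuclideanSpace ℝ (Fin d)) :
    Real.log (anyonGain α f v w ω) - Real.log (anyonLoss α f v w ω) =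
      anyonLogRatio α f (vPost v w ω) + anyonLogRatio α f (vPostStar v w ω)
        - anyonLogRatio α f v - anyonLogRatio α f w := by
  have hf₀ v := (hf v).ne'
  have hF₀ v := (hF v).ne'
  simp only [anyonGain, anyonLoss, anyonLogRatio, ne_eq, mul_eq_zero, hf₀, hF₀, or_self,
    not_false_eq_true, Real.log_mul, Real.log_div]
  ring

end Positive

lemma anyonBracket_swap (α : ℝ) (f : EuclideanSpace ℝ (Fin d) → ℝ)
    (v w ω : EuclideanSpace ℝ (Fin d)) : anyonBracket α f w v ω = anyonBracket α f v w ω := by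
  rw [anyonBracket, anyonBracket, vPost_swap v w, vPostStar_swap v w]; ring

lemma anyonBracket_vPost_vPostStar (α : ℝ) (f : EuclideanSpace ℝ (Fin d) → ℝ)
    {ω : EuclideanSpace ℝ (Fin d)} (hω : ‖ω‖ = 1) (v w : EuclideanSpace ℝ (Fin d)) :
    anyonBracket α f (vPost v w ω) (vPostStar v w ω) ω = -anyonBracket α f v w ω := by
  rw [anyonBracket, anyonBracket, vPost_vPost_vPostStar hω, vPostStar_vPost_vPostStar hω]; ring

def collisionWeight (α : ℝ) (B : EuclideanSpace ℝ (Fin d) → EuclideanSpace ℝ (Fin d) → ℝ)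
    (f : EuclideanSpace ℝ (Fin d) → ℝ) (p : CollisionSpace d) : ℝ :=
  B (p.1 - p.2.1) p.2.2 * anyonBracket α f p.1 p.2.1 p.2.2

section Kernel

variable (hB : ∀ z z' ω : EuclideanSpace ℝ (Fin d),
  ‖z‖ = ‖z'‖ → |(inner ℝ z ω : ℝ)| = |(inner ℝ z' ω : ℝ)| → B z ω = B z' ω)
include hB

lemma collisionWeight_velocitySwap (p : CollisionSpace d) :
    collisionWeight α B f (velocitySwap p) = collisionWeight α B f p := by
  rw [collisionWeight, collisionWeight, velocitySwap, anyonBracket_swap,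
    hB _ _ _ (norm_sub_rev _ _) (by rw [← neg_sub, inner_neg_left, abs_neg])]

lemma collisionWeight_collisionMap (p : CollisionSpace d) :
    collisionWeight α B f (collisionMap p) = -collisionWeight α B f p := by
  have hω := norm_eq_of_mem_sphere p.2.2
  rw [collisionWeight, collisionWeight, collisionMap, anyonBracket_vPost_vPostStar α f hω,
    hB _ _ _ (norm_vPost_sub_vPostStar hω) (by rw [inner_vPost_sub_vPostStar hω, abs_neg]),
    mul_neg]

end Kernel

lemma measurable_anyonLogRatio (α : ℝ) (hf : Measurable f) : Measurable (anyonLogRatio α f) :=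
  Real.measurable_log.comp (hf.div ((measurable_fillingFactor α).comp hf))

lemma measurable_collisionWeight
    (hB : Measurable fun p : EuclideanSpace ℝ (Fin d) × EuclideanSpace ℝ (Fin d) => B p.1 p.2)
    (hf : Measurable f) : Measurable (collisionWeight α B f) := by
  have := measurable_fillingFactor α
  unfold collisionWeight anyonBracket vPost vPostStar
  fun_prop

end CollisionWeight

instance isFiniteMeasure_sphereUnif (d : ℕ) : IsFiniteMeasure (sphereUnif d) where
  measure_univ_lt_top := by
    rw [sphereUnif, Measure.smul_apply, smul_eq_mul]
    exact (ENNReal.inv_mul_le_one _).trans_lt ENNReal.one_lt_top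

section EntropyProduction

variable {d : ℕ} {α : ℝ} {B : EuclideanSpace ℝ (Fin d) → EuclideanSpace ℝ (Fin d) → ℝ}
  {f : EuclideanSpace ℝ (Fin d) → ℝ}

lemma integral_anyonQ_mul {g : EuclideanSpace ℝ (Fin d) → ℝ}
    (hint : Integrable (fun p => collisionWeight α B f p * g p.1)
      (collisionMeasure (sphereUnif d))) :
    ∫ v, anyonQ α B f v * g v =
      ∫ p, collisionWeight α B f p * g p.1 ∂collisionMeasure (sphereUnif d) := by
  rw [integral_prod _ hint]
  simp only [anyonQ, collisionWeight, ← integral_mul_const]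

section Positive

variable (hf : ∀ v, 0 < f v) (hF : ∀ v, 0 < fillingFactor α (f v))
include hf hF

lemma integrable_collisionWeight_mul {ν : Measure (sphere (0 : EuclideanSpace ℝ (Fin d)) 1)}
    {g : EuclideanSpace ℝ (Fin d) → ℝ} {M : ℝ} (hB : ∀ z ω, 0 ≤ B z ω)
    (hBmeas : Measurable fun p : EuclideanSpace ℝ (Fin d) × EuclideanSpace ℝ (Fin d) => B p.1 p.2)
    (hfmeas : Measurable f) (hg : Measurable g) (hgM : ∀ v, |g v| ≤ M)
    (hint : Integrable (fun p : CollisionSpace d =>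
      B (p.1 - p.2.1) p.2.2 * anyonBracketAbs α f p.1 p.2.1 p.2.2) (collisionMeasure ν)) :
    Integrable (fun p => collisionWeight α B f p * g p.1) (collisionMeasure ν) := by
  refine (hint.mul_const M).mono'
    ((measurable_collisionWeight hBmeas hfmeas).mul (hg.comp measurable_fst)).aestronglyMeasurable
    (ae_of_all _ fun p => ?_)
  rw [Real.norm_eq_abs, collisionWeight, abs_mul, abs_mul, abs_of_nonneg (hB _ _), mul_assoc,
    mul_assoc]
  exact mul_le_mul_of_nonneg_left (mul_le_mul (abs_anyonBracket_le hf hF _ _ _) (hgM _)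
    (abs_nonneg _) ((abs_nonneg _).trans (abs_anyonBracket_le hf hF _ _ _))) (hB _ _)

lemma collisionWeight_mul_anyonLogRatio_eq (p : CollisionSpace d) :
    collisionWeight α B f p * (anyonLogRatio α f (vPost p.1 p.2.1 p.2.2)
      + anyonLogRatio α f (vPostStar p.1 p.2.1 p.2.2) - anyonLogRatio α f p.1
      - anyonLogRatio α f p.2.1) =
      B (p.1 - p.2.1) p.2.2 * ((anyonGain α f p.1 p.2.1 p.2.2 - anyonLoss α f p.1 p.2.1 p.2.2) *
        (Real.log (anyonGain α f p.1 p.2.1 p.2.2) - Real.log (anyonLoss α f p.1 p.2.1 p.2.2))) := by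
  rw [log_anyonGain_sub_log_anyonLoss hf hF, collisionWeight, anyonBracket_eq_sub, mul_assoc]

lemma collisionWeight_mul_anyonLogRatio_nonneg (hB : ∀ z ω, 0 ≤ B z ω) (p : CollisionSpace d) :
    0 ≤ collisionWeight α B f p * (anyonLogRatio α f (vPost p.1 p.2.1 p.2.2)
      + anyonLogRatio α f (vPostStar p.1 p.2.1 p.2.2) - anyonLogRatio α f p.1
      - anyonLogRatio α f p.2.1) := by
  rw [collisionWeight_mul_anyonLogRatio_eq hf hF]
  exact mul_nonneg (hB _ _) (sub_mul_log_sub_log_nonneg (anyonGain_pos hf hF _ _ _)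
    (anyonLoss_pos hf hF _ _ _))

lemma collisionWeight_mul_anyonLogRatio_eq_zero_iff (p : CollisionSpace d) :
    collisionWeight α B f p * (anyonLogRatio α f (vPost p.1 p.2.1 p.2.2)
      + anyonLogRatio α f (vPostStar p.1 p.2.1 p.2.2) - anyonLogRatio α f p.1
      - anyonLogRatio α f p.2.1) = 0 ↔
      B (p.1 - p.2.1) p.2.2 = 0 ∨ anyonBracket α f p.1 p.2.1 p.2.2 = 0 := by
  rw [collisionWeight_mul_anyonLogRatio_eq hf hF, mul_eq_zero, anyonBracket_eq_sub, sub_eq_zero,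
    sub_mul_log_sub_log_eq_zero_iff (anyonGain_pos hf hF _ _ _) (anyonLoss_pos hf hF _ _ _)]

end Positive

end EntropyProduction

theorem anyon_H_theorem_general
    (d : ℕ) (α : ℝ) (hα : α ∈ Set.Ioo (0 : ℝ) 1)
    (δ : ℝ) (hδ : δ ∈ Set.Ioo 0 (1 / (2 * α)))
    (B : EuclideanSpace ℝ (Fin d) → EuclideanSpace ℝ (Fin d) → ℝ)
    (hBpos : ∀ z ω, 0 ≤ B z ω)
    (hBmeas : Measurable fun p : EuclideanSpace ℝ (Fin d) × EuclideanSpace ℝ (Fin d) =>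
      B p.1 p.2)
    (hBsymm : ∀ z z' ω ω' : EuclideanSpace ℝ (Fin d),
      ‖z‖ = ‖z'‖ → |(inner ℝ z ω : ℝ)| = |(inner ℝ z' ω' : ℝ)| → B z ω = B z' ω')
    (f : EuclideanSpace ℝ (Fin d) → ℝ) (hfmeas : Measurable f)
    (hfrange : ∀ v, f v ∈ Set.Icc δ (1 / α - δ))
    (hint : Integrable
      (fun p : EuclideanSpace ℝ (Fin d) ×
          (EuclideanSpace ℝ (Fin d) × sphere (0 : EuclideanSpace ℝ (Fin d)) 1) =>
        B (p.1 - p.2.1) (p.2.2 : EuclideanSpace ℝ (Fin d))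
          * anyonBracketAbs α f p.1 p.2.1 (p.2.2 : EuclideanSpace ℝ (Fin d)))
      ((volume : Measure (EuclideanSpace ℝ (Fin d))).prod
        ((volume : Measure (EuclideanSpace ℝ (Fin d))).prod (sphereUnif d)))) :
    (∫ v, anyonQ α B f v * Real.log (f v / fillingFactor α (f v)) ≤ 0)
    ∧ ((∫ v, anyonQ α B f v * Real.log (f v / fillingFactor α (f v))) = 0 ↔
        ∀ᵐ p : EuclideanSpace ℝ (Fin d) ×
            (EuclideanSpace ℝ (Fin d) × sphere (0 : EuclideanSpace ℝ (Fin d)) 1)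
          ∂((volume : Measure (EuclideanSpace ℝ (Fin d))).prod
            ((volume : Measure (EuclideanSpace ℝ (Fin d))).prod (sphereUnif d))),
          B (p.1 - p.2.1) (p.2.2 : EuclideanSpace ℝ (Fin d)) = 0 ∨
            anyonBracket α f p.1 p.2.1 (p.2.2 : EuclideanSpace ℝ (Fin d)) = 0) := by
  have hf v : 0 < f v := hδ.1.trans_le (hfrange v).1
  have hF v : 0 < fillingFactor α (f v) := fillingFactor_pos_of_mem_Icc hα hδ.1 (hfrange v)
  have hB z z' ω := hBsymm z z' ω ω
  obtain ⟨M, hM⟩ := exists_abs_log_div_fillingFactor_le hα hδ.1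
  have hint' := integrable_collisionWeight_mul hf hF (g := anyonLogRatio α f) hBpos hBmeas hfmeas
    (measurable_anyonLogRatio α hfmeas) (fun v => hM _ (hfrange v)) hint
  have hw₁ := collisionWeight_velocitySwap (α := α) (f := f) hB
  have hw₂ := collisionWeight_collisionMap (α := α) (f := f) hB
  have hswap := measurePreserving_velocitySwap (sphereUnif d)
  have hcoll := measurePreserving_collisionMap (sphereUnif d)
  have hD := collisionWeight_mul_anyonLogRatio_nonneg hf hF hBpos
  have hE : ∫ v, anyonQ α B f v * Real.log (f v / fillingFactor α (f v)) =
      ∫ p, collisionWeight α B f p * anyonLogRatio α f p.1 ∂collisionMeasure (sphereUnif d) :=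
    integral_anyonQ_mul hint'
  rw [hE, integral_mul_eq_zero_iff_of_symmetrization_nonneg hswap hcoll hw₁ hw₂ hint' hD]
  exact ⟨integral_mul_nonpos_of_symmetrization_nonneg hswap hcoll hw₁ hw₂ hint' hD,
    eventually_congr (ae_of_all _ (collisionWeight_mul_anyonLogRatio_eq_zero_iff hf hF))⟩

/-- the H-theorem for the anyon Boltzmann equation: the entropy
production `∫ Q(f) log(f/F(f))` is nonpositive, with equality if and only if the
collision bracket vanishes `B`-almost everywhere. -/
theorem anyon_H_theorem
    (d : ℕ) (hd : 2 ≤ d) (α : ℝ) (hα : α ∈ Set.Ioo (0 : ℝ) 1)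
    (δ : ℝ) (hδ : δ ∈ Set.Ioo 0 (1 / (2 * α)))
    (B : EuclideanSpace ℝ (Fin d) → EuclideanSpace ℝ (Fin d) → ℝ)
    (hBpos : ∀ z ω, 0 ≤ B z ω)
    (hBmeas : Measurable fun p : EuclideanSpace ℝ (Fin d) × EuclideanSpace ℝ (Fin d) =>
      B p.1 p.2)
    (hBsymm : ∀ z z' ω ω' : EuclideanSpace ℝ (Fin d),
      ‖z‖ = ‖z'‖ → |(inner ℝ z ω : ℝ)| = |(inner ℝ z' ω' : ℝ)| → B z ω = B z' ω')
    (f : EuclideanSpace ℝ (Fin d) → ℝ) (hfmeas : Measurable f)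
    (hfrange : ∀ v, f v ∈ Set.Icc δ (1 / α - δ))
    (hint : Integrable
      (fun p : EuclideanSpace ℝ (Fin d) ×
          (EuclideanSpace ℝ (Fin d) × sphere (0 : EuclideanSpace ℝ (Fin d)) 1) =>
        B (p.1 - p.2.1) (p.2.2 : EuclideanSpace ℝ (Fin d))
          * anyonBracketAbs α f p.1 p.2.1 (p.2.2 : EuclideanSpace ℝ (Fin d)))
      ((volume : Measure (EuclideanSpace ℝ (Fin d))).prod
        ((volume : Measure (EuclideanSpace ℝ (Fin d))).prod (sphereUnif d))))
    (hintH : Integrable (fun v => anyonQ α B f v * Real.log (f v / fillingFactor α (f v)))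
      (volume : Measure (EuclideanSpace ℝ (Fin d)))) :
    (∫ v, anyonQ α B f v * Real.log (f v / fillingFactor α (f v)) ≤ 0)
    ∧ ((∫ v, anyonQ α B f v * Real.log (f v / fillingFactor α (f v))) = 0 ↔
        ∀ᵐ p : EuclideanSpace ℝ (Fin d) ×
            (EuclideanSpace ℝ (Fin d) × sphere (0 : EuclideanSpace ℝ (Fin d)) 1)
          ∂((volume : Measure (EuclideanSpace ℝ (Fin d))).prod
            ((volume : Measure (EuclideanSpace ℝ (Fin d))).prod (sphereUnif d))),
          B (p.1 - p.2.1) (p.2.2 : EuclideanSpace ℝ (Fin d)) = 0 ∨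
            anyonBracket α f p.1 p.2.1 (p.2.2 : EuclideanSpace ℝ (Fin d)) = 0) :=
  anyon_H_theorem_general d α hα δ hδ B hBpos hBmeas hBsymm f hfmeas hfrange hint

end
end

section
/- Let α ∈ (0,1) and define the anyon entropy density s : (0, 1/α) → ℝ by s(f) = f·log f + (1/α − f)·log((1−αf)^α) − (1/(1−α) + f)·log((1+(1−α)f)^{1−α}). Then s is differentiable on (0, 1/α) with s'(f) = log( f / F(f) ), where F(f) = (1−αf)^α (1+(1−α)f)^{1−α}. In particular s'(f) = 0 exactly when f/F(f) = 1. -/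
/-!
Writing `log (x ^ c) = c * log x`, the prefactors `1/α − f` and `1/(1−α) + f` turn into
`(1 − αf)/α` and `(1 + (1−α)f)/(1−α)`, so near every `f ∈ (0, 1/α)`
`s(f) = f log f + (1 − αf) log (1 − αf) − (1 + (1−α)f) log (1 + (1−α)f)`.
Since `(x log x)' = log x + 1`, differentiating leaves
`log f − α log (1 − αf) − (1−α) log (1 + (1−α)f) = log (f / F(f))`,
the constants cancelling as `1 − α − (1 − α) = 0`.
-/

noncomputable section

/-- The anyon entropy density
`s(f) = f log f + (1/α − f) log((1−αf)^α) − (1/(1−α) + f) log((1+(1−α)f)^{1−α})`. -/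
def anyonEntropyDensity (α f : ℝ) : ℝ :=
  f * Real.log f + (1 / α - f) * Real.log ((1 - α * f) ^ α)
    - (1 / (1 - α) + f) * Real.log ((1 + (1 - α) * f) ^ (1 - α))

open Real

lemma Real.log_eq_zero_iff_of_pos {x : ℝ} (hx : 0 < x) : log x = 0 ↔ x = 1 :=
  ⟨fun h ↦ log_injOn_pos hx (Set.mem_Ioi.2 one_pos) (h.trans log_one.symm), fun h ↦ h ▸ log_one⟩

lemma HasDerivAt.mul_log {g : ℝ → ℝ} {g' x : ℝ} (hg : HasDerivAt g g' x) (hx : g x ≠ 0) :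
    HasDerivAt (fun t ↦ g t * Real.log (g t)) ((Real.log (g x) + 1) * g') x :=
  (hasDerivAt_mul_log hx).comp x hg

section

variable {α f : ℝ}

lemma anyonEntropyDensity_eq_of_pos (h₁ : 0 < 1 - α * f) (h₂ : 0 < 1 + (1 - α) * f) :
    anyonEntropyDensity α f = f * log f + (1 - α * f) * log (1 - α * f)
      - (1 + (1 - α) * f) * log (1 + (1 - α) * f) := by
  rw [anyonEntropyDensity, log_rpow h₁, log_rpow h₂]
  rcases eq_or_ne α 0 with rfl | hα₀
  · simp
  rcases eq_or_ne α 1 with rfl | hα₁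
  · simp
  field_simp [sub_ne_zero.2 hα₁.symm]

lemma fillingFactor_pos (h₁ : 0 < 1 - α * f) (h₂ : 0 < 1 + (1 - α) * f) :
    0 < fillingFactor α f := by
  unfold fillingFactor
  positivity

lemma log_fillingFactor (h₁ : 0 < 1 - α * f) (h₂ : 0 < 1 + (1 - α) * f) :
    log (fillingFactor α f) = α * log (1 - α * f) + (1 - α) * log (1 + (1 - α) * f) := by
  rw [fillingFactor, log_mul (by positivity) (by positivity), log_rpow h₁, log_rpow h₂]

lemma hasDerivAt_anyonEntropyDensity (hf : 0 < f) (h₁ : 0 < 1 - α * f)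
    (h₂ : 0 < 1 + (1 - α) * f) :
    HasDerivAt (anyonEntropyDensity α) (log (f / fillingFactor α f)) f := by
  have hs : anyonEntropyDensity α =ᶠ[nhds f] fun t ↦ t * log t + (1 - α * t) * log (1 - α * t)
      - (1 + (1 - α) * t) * log (1 + (1 - α) * t) := by
    have ev₁ : ∀ᶠ t in nhds f, 0 < 1 - α * t :=
      continuousAt_const.eventually_lt (by fun_prop) h₁
    have ev₂ : ∀ᶠ t in nhds f, 0 < 1 + (1 - α) * t :=
      continuousAt_const.eventually_lt (by fun_prop) h₂
    filter_upwards [ev₁, ev₂] with t ht₁ ht₂ using anyonEntropyDensity_eq_of_pos ht₁ ht₂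
  have hd₁ : HasDerivAt (fun t ↦ 1 - α * t) (-α) f := by
    simpa using ((hasDerivAt_id f).const_mul α).const_sub 1
  have hd₂ : HasDerivAt (fun t ↦ 1 + (1 - α) * t) (1 - α) f := by
    simpa using ((hasDerivAt_id f).const_mul (1 - α)).const_add 1
  have hg := ((hasDerivAt_mul_log hf.ne').add (hd₁.mul_log h₁.ne')).sub (hd₂.mul_log h₂.ne')
  rw [log_div hf.ne' (fillingFactor_pos h₁ h₂).ne', log_fillingFactor h₁ h₂]
  exact (hg.congr_of_eventuallyEq hs).congr_deriv (by ring)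

end

/-- on `(0, 1/α)` the anyon entropy density is differentiable with
derivative `log(f/F(f))`; in particular the derivative vanishes exactly when
`f/F(f) = 1`. -/
theorem anyonEntropyDensity_hasDerivAt
    (α : ℝ) (hα : α ∈ Set.Ioo (0 : ℝ) 1) :
    ∀ f ∈ Set.Ioo (0 : ℝ) (1 / α),
      HasDerivAt (anyonEntropyDensity α) (Real.log (f / fillingFactor α f)) f
      ∧ (Real.log (f / fillingFactor α f) = 0 ↔ f / fillingFactor α f = 1) := by
  obtain ⟨hα₀, hα₁⟩ := hα
  rintro f ⟨hf₀, hfα⟩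
  have h₁ : 0 < 1 - α * f := by
    have := (lt_div_iff₀ hα₀).mp hfα
    linarith
  have h₂ : 0 < 1 + (1 - α) * f := by nlinarith
  exact ⟨hasDerivAt_anyonEntropyDensity hf₀ h₁ h₂,
    log_eq_zero_iff_of_pos (div_pos hf₀ (fillingFactor_pos h₁ h₂))⟩

end
end
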